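/- arXiv:0911.5579 — 4 statements merged into one kernel-verified Lean document; each statement's English description precedes it below -/
import Mathlib

section
/- Define K₁ : (0,∞) → ℝ by K₁(y) := ∫_0^∞ e^{−y·cosh u}·cosh u du. Fix parameters μ, θ, b ∈ ℝ and δ > 0 with θ² + μ² > 0, and for t > 0 define f_t(z) := (1/π)·sqrt((θ²+μ²)/(((z−bt)/(δt))²+1))·exp(μδt + θ(z−bt))·K₁(δt·sqrt((θ²+μ²)·(1+((z−bt)/(δt))²))), and α(t) := t^{-1/2}·exp(t·(μδ − θb − sqrt((b²+δ²)(θ²+μ²)))). Then for every z ∈ ℝ, f_t(z)/α(t) → (δ/√(2π))·((θ²+μ²)/(b²+δ²)³)^{1/4}·exp((θ + b·sqrt((θ²+μ²)/(b²+δ²)))·z) as t → ∞. -/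
/-!
Substituting `s = sinh u` and then `s = v / √y` gives
`√y eʸ K₁(y) = ∫₀^∞ exp(-v² / (1 + √(1 + v²/y))) dv`, which tends to `∫₀^∞ e^{-v²/2} dv = √(π/2)`
by dominated convergence, with dominating function `e^{2-v}`.

With `s(t) = √((δt)² + (z - bt)²)` the Bessel argument in `f_t(z)` is `y = √(θ²+μ²) s(t)`, and
`f_t(z) / α(t)` factors into `√y eʸ K₁(y)`, powers of `s(t)/t → √(b²+δ²)`, and
`exp(√(θ²+μ²) (t √(b²+δ²) - s(t)))`. Since `s(t)` is the square root of a quadratic in `t`, its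
asymptote gives `t √(b²+δ²) - s(t) → bz / √(b²+δ²)`.
-/

open Filter Topology Real MeasureTheory

/-- The modified Bessel function of the third kind of order 1,
`K₁(y) = ∫_0^∞ e^{-y cosh u} cosh u du`. -/
noncomputable def besselK1 (y : ℝ) : ℝ :=
  ∫ u in Set.Ioi (0 : ℝ), Real.exp (-y * Real.cosh u) * Real.cosh u

section QuadraticRoot

variable {a β γ t : ℝ}

lemma sqrt_quadratic_eq_mul_sqrt (ht : 0 < t) :
    √(a * t ^ 2 + β * t + γ) = t * √(a + β / t + γ / t ^ 2) := by
  rw [← sqrt_sq ht.le, ← sqrt_mul (sq_nonneg t), sqrt_sq ht.le]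
  congr 1
  field_simp

lemma tendsto_quadratic_div_sq (a β γ : ℝ) :
    Tendsto (fun t : ℝ => a + β / t + γ / t ^ 2) atTop (𝓝 a) := by
  have hβ := tendsto_const_nhds (x := β).div_atTop tendsto_id
  have hγ := tendsto_const_nhds (x := γ).div_atTop (tendsto_pow_atTop two_ne_zero)
  simpa using (hβ.const_add a).add hγ

lemma tendsto_sqrt_quadratic_div (a β γ : ℝ) :
    Tendsto (fun t : ℝ => √(a * t ^ 2 + β * t + γ) / t) atTop (𝓝 √a) := by
  refine ((continuous_sqrt.tendsto a).comp (tendsto_quadratic_div_sq a β γ)).congr' ?_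
  filter_upwards [eventually_gt_atTop 0] with t ht
  rw [Function.comp_apply, sqrt_quadratic_eq_mul_sqrt ht, mul_div_cancel_left₀ _ ht.ne']

lemma tendsto_sqrt_quadratic_atTop (ha : 0 < a) (β γ : ℝ) :
    Tendsto (fun t : ℝ => √(a * t ^ 2 + β * t + γ)) atTop atTop := by
  refine (tendsto_id.atTop_mul_pos (sqrt_pos.2 ha) (tendsto_sqrt_quadratic_div a β γ)).congr' ?_
  filter_upwards [eventually_gt_atTop 0] with t ht
  exact mul_div_cancel₀ _ ht.ne'

lemma tendsto_mul_sqrt_sub_sqrt_quadratic (ha : 0 < a) (β γ : ℝ) :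
    Tendsto (fun t : ℝ => t * √a - √(a * t ^ 2 + β * t + γ)) atTop
      (𝓝 (-β / (2 * √a))) := by
  have hw := tendsto_quadratic_div_sq a β γ
  -- with `w = a + β/t + γ/t²`: `t √a - t √w = t (a - w) / (√a + √w) = -(β + γ/t) / (√a + √w)`
  have hnum : Tendsto (fun t : ℝ => -(β + γ / t)) atTop (𝓝 (-(β + 0))) :=
    (tendsto_const_nhds.div_atTop tendsto_id).const_add β |>.neg
  have hden : Tendsto (fun t : ℝ => √a + √(a + β / t + γ / t ^ 2)) atTop (𝓝 (√a + √a)) :=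
    ((continuous_sqrt.tendsto a).comp hw).const_add _
  have hsa : 0 < √a := sqrt_pos.2 ha
  have hlim : -(β + 0) / (√a + √a) = -β / (2 * √a) := by rw [add_zero, ← two_mul]
  rw [← hlim]
  refine (hnum.div hden (by positivity)).congr' ?_
  filter_upwards [eventually_gt_atTop 0, hw.eventually (lt_mem_nhds ha)] with t ht hwt
  set w := a + β / t + γ / t ^ 2 with hw_def
  have hdiff : t * (a - w) = -(β + γ / t) := by rw [hw_def]; field_simp; ring
  rw [Pi.div_apply, sqrt_quadratic_eq_mul_sqrt ht, ← hw_def, div_eq_iff (by positivity)]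
  linear_combination -hdiff - t * sq_sqrt ha.le + t * sq_sqrt hwt.le

end QuadraticRoot

open Set

noncomputable def scaledBesselK1 (y : ℝ) : ℝ := √y * exp y * besselK1 y

lemma sinh_image_Ioi_zero : sinh '' Ioi 0 = Ioi 0 := by
  ext x
  refine ⟨?_, fun hx => ⟨arsinh x, arsinh_pos_iff.2 hx, sinh_arsinh x⟩⟩
  rintro ⟨u, hu, rfl⟩
  exact sinh_pos_iff.2 hu

lemma besselK1_eq_integral_exp_sqrt (y : ℝ) :
    besselK1 y = ∫ s in Ioi 0, exp (-y * √(1 + s ^ 2)) := by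
  have hsubst := integral_image_eq_integral_abs_deriv_smul (s := Ioi 0) measurableSet_Ioi
    (fun x _ => (hasDerivAt_sinh x).hasDerivWithinAt) sinh_injective.injOn
    (fun s => exp (-y * √(1 + s ^ 2)))
  rw [sinh_image_Ioi_zero] at hsubst
  rw [hsubst, besselK1]
  refine setIntegral_congr_fun measurableSet_Ioi fun u _ => ?_
  rw [← cosh_sq', sqrt_sq (cosh_pos u).le, abs_of_pos (cosh_pos u), smul_eq_mul, mul_comm]

lemma scaledBesselK1_eq_integral {y : ℝ} (hy : 0 < y) :
    scaledBesselK1 y = ∫ v in Ioi 0, exp (-(1 + √(1 + v ^ 2 / y))⁻¹ * v ^ 2) := by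
  have hscale := integral_comp_mul_left_Ioi
    (fun s => exp (-y * √(1 + s ^ 2))) 0 (inv_pos.2 (sqrt_pos.2 hy))
  rw [mul_zero, inv_inv, smul_eq_mul] at hscale
  rw [scaledBesselK1, besselK1_eq_integral_exp_sqrt, mul_comm √y, mul_assoc, ← hscale,
    ← integral_const_mul]
  refine setIntegral_congr_fun measurableSet_Ioi fun v _ => ?_
  rw [mul_pow, inv_pow, sq_sqrt hy.le, inv_mul_eq_div, ← exp_add]
  congr 1
  have hw : y * √(1 + v ^ 2 / y) ^ 2 = y + v ^ 2 := by
    rw [sq_sqrt (by positivity)]; field_simp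
  have hw0 := sqrt_nonneg (1 + v ^ 2 / y)
  generalize √(1 + v ^ 2 / y) = w at hw hw0 ⊢
  field_simp
  linear_combination -hw

lemma exp_neg_inv_one_add_sqrt_mul_sq_le {y v : ℝ} (hy : 1 ≤ y) (hv : 0 ≤ v) :
    exp (-(1 + √(1 + v ^ 2 / y))⁻¹ * v ^ 2) ≤ exp (2 - v) := by
  refine exp_le_exp.2 ?_
  have hroot : √(1 + v ^ 2 / y) ≤ 1 + v := by
    refine sqrt_le_iff.2 ⟨by positivity, ?_⟩
    have : v ^ 2 / y ≤ v ^ 2 := div_le_self (sq_nonneg v) hy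
    nlinarith
  have hden : (1 + √(1 + v ^ 2 / y))⁻¹ ≥ (2 + v)⁻¹ :=
    inv_anti₀ (by positivity) (by linarith)
  have hsq : v - 2 ≤ (2 + v)⁻¹ * v ^ 2 := by
    rw [inv_mul_eq_div, le_div_iff₀ (by positivity)]
    nlinarith
  nlinarith [sq_nonneg v]

lemma integral_exp_neg_half_mul_sq_Ioi : ∫ v in Ioi 0, exp (-2⁻¹ * v ^ 2) = √(π / 2) := by
  rw [integral_gaussian_Ioi, div_inv_eq_mul, show π / 2 = π * 2 / 2 ^ 2 by ring,
    sqrt_div' _ (sq_nonneg 2), sqrt_sq two_pos.le]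

lemma tendsto_scaledBesselK1 :
    Tendsto scaledBesselK1 atTop (𝓝 √(π / 2)) := by
  rw [← integral_exp_neg_half_mul_sq_Ioi]
  have hlim : Tendsto (fun y => ∫ v in Ioi 0, exp (-(1 + √(1 + v ^ 2 / y))⁻¹ * v ^ 2)) atTop
      (𝓝 (∫ v in Ioi 0, exp (-2⁻¹ * v ^ 2))) := by
    refine tendsto_integral_filter_of_dominated_convergence (fun v => exp (2 - v))
      (Eventually.of_forall fun y => by fun_prop) ?_ ?_ ?_
    · filter_upwards [eventually_ge_atTop 1] with y hy
      filter_upwards [ae_restrict_mem measurableSet_Ioi] with v hv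
      rw [norm_of_nonneg (exp_pos _).le]
      exact exp_neg_inv_one_add_sqrt_mul_sq_le hy (le_of_lt hv)
    · have hexp := (exp_neg_integrableOn_Ioi 0 one_pos).const_mul (exp 2)
      refine IntegrableOn.congr_fun hexp (fun v _ => ?_) measurableSet_Ioi
      rw [← exp_add, neg_one_mul, ← sub_eq_add_neg]
    · refine Eventually.of_forall fun v => ?_
      have hcont : ContinuousAt (fun u : ℝ => exp (-(1 + √(1 + u))⁻¹ * v ^ 2)) 0 := by
        fun_prop (disch := positivity)
      have := hcont.tendsto.comp (tendsto_const_nhds (x := v ^ 2).div_atTop tendsto_id)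
      rwa [add_zero, sqrt_one, one_add_one_eq_two] at this
  exact hlim.congr' <| (eventually_gt_atTop 0).mono fun y hy => (scaledBesselK1_eq_integral hy).symm

noncomputable def nigDensity (μ θ b δ t z : ℝ) : ℝ :=
  (1 / π) * √((θ ^ 2 + μ ^ 2) / (((z - b * t) / (δ * t)) ^ 2 + 1)) *
    exp (μ * δ * t + θ * (z - b * t)) *
    besselK1 (δ * t * √((θ ^ 2 + μ ^ 2) * (1 + ((z - b * t) / (δ * t)) ^ 2)))

noncomputable def nigRate (μ θ b δ t : ℝ) : ℝ :=
  t ^ (-(1 / 2 : ℝ)) * exp (t * (μ * δ - θ * b - √((b ^ 2 + δ ^ 2) * (θ ^ 2 + μ ^ 2))))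

lemma nigDensity_div_nigRate_eq {μ θ b δ t z s : ℝ} (hδ : 0 < δ) (hθμ : 0 < θ ^ 2 + μ ^ 2)
    (ht : 0 < t) (hs : s = √((δ * t) ^ 2 + (z - b * t) ^ 2)) :
    nigDensity μ θ b δ t z / nigRate μ θ b δ t =
      δ * √(θ ^ 2 + μ ^ 2) / π * exp (θ * z) * scaledBesselK1 (√(θ ^ 2 + μ ^ 2) * s) /
        (s / t * √(√(θ ^ 2 + μ ^ 2) * (s / t))) *
        exp (√(θ ^ 2 + μ ^ 2) * (t * √(b ^ 2 + δ ^ 2) - s)) := by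
  rw [nigDensity, nigRate, scaledBesselK1]
  set q := θ ^ 2 + μ ^ 2
  set x := (z - b * t) / (δ * t)
  have hδt : 0 < δ * t := mul_pos hδ ht
  have hsum : (δ * t) ^ 2 + (z - b * t) ^ 2 = (δ * t) ^ 2 * (1 + x ^ 2) := by
    simp only [x]; field_simp
  have hroot : √(1 + x ^ 2) = s / (δ * t) := by
    rw [hs, hsum, sqrt_mul (sq_nonneg _), sqrt_sq hδt.le]; field_simp
  have hs_pos : 0 < s := by
    rw [eq_div_iff hδt.ne'] at hroot; rw [← hroot]; positivity
  have harg : δ * t * √(q * (1 + x ^ 2)) = √q * s := by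
    rw [sqrt_mul' _ (by positivity), hroot]; field_simp
  have hpre : √(q / (x ^ 2 + 1)) = √q * (δ * t) / s := by
    rw [sqrt_div' _ (by positivity), add_comm, hroot]; field_simp
  have hsq : √(√q * s) = √(√q * (s / t)) * √t := by
    rw [← sqrt_mul (by positivity)]; field_simp
  have hexp : exp (μ * δ * t + θ * (z - b * t)) = exp (θ * z) * exp (√q * s) *
      exp (√q * (t * √(b ^ 2 + δ ^ 2) - s)) *
      exp (t * (μ * δ - θ * b - √(b ^ 2 + δ ^ 2) * √q)) := by
    simp only [← exp_add]; ring_nf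
  have hsqrt_pos : 0 < √(√q * s / t) := by positivity
  rw [harg, hpre, sqrt_mul (by positivity), hsq, rpow_neg ht.le, ← sqrt_eq_rpow, hexp]
  field_simp

lemma sqrt_div_mul_sqrt_sqrt_mul {p q : ℝ} (hp : 0 < p) (hq : 0 < q) :
    √q / (√p * √(√q * √p)) = (q / p ^ 3) ^ (1 / 4 : ℝ) := by
  refine (pow_left_inj₀ (by positivity) (by positivity) four_ne_zero).1 ?_
  have h4 : ∀ x : ℝ, 0 ≤ x → √x ^ 4 = x ^ 2 := fun x hx => by
    rw [show 4 = 2 * 2 by rfl, pow_mul, sq_sqrt hx]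
  rw [one_div, show (4 : ℝ)⁻¹ = ((4 : ℕ) : ℝ)⁻¹ by norm_num,
    rpow_inv_natCast_pow (by positivity) four_ne_zero, div_pow, mul_pow, h4 q hq.le, h4 p hp.le,
    h4 _ (by positivity), mul_pow, sq_sqrt hq.le, sq_sqrt hp.le]
  field_simp

lemma nig_limit_eq {p q : ℝ} (hp : 0 < p) (hq : 0 < q) (δ θ b z : ℝ) :
    δ / √(2 * π) * (q / p ^ 3) ^ (1 / 4 : ℝ) * exp ((θ + b * √(q / p)) * z) =
      δ * √q / π * exp (θ * z) * √(π / 2) / (√p * √(√q * √p)) *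
        exp (√q * (-(-2 * b * z) / (2 * √p))) := by
  have hπ : δ / √(2 * π) = δ * √(π / 2) / π := by
    rw [div_eq_div_iff (by positivity) pi_pos.ne', mul_assoc, ← sqrt_mul (by positivity),
      show π / 2 * (2 * π) = π ^ 2 by ring, sqrt_sq pi_pos.le]
  have hexp : exp ((θ + b * √(q / p)) * z) =
      exp (θ * z) * exp (√q * (-(-2 * b * z) / (2 * √p))) := by
    rw [← exp_add, sqrt_div' _ hp.le]
    congr 1
    field_simp
  rw [hπ, hexp, ← sqrt_div_mul_sqrt_sqrt_mul hp hq]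
  ring

/-- NIG model (conv_Z): the density `f_t` of the Normal Inverse Gaussian log-price,
rescaled by `α(t) = t^{-1/2} exp(t(μδ - θb - √((b²+δ²)(θ²+μ²))))`, converges pointwise to
the limiting modified density
`(δ/√(2π)) ((θ²+μ²)/(b²+δ²)³)^{1/4} exp((θ + b√((θ²+μ²)/(b²+δ²))) z)`. -/
theorem nig_modified_density_limit
    (μ θ b δ : ℝ) (hδ : 0 < δ) (hθμ : 0 < θ ^ 2 + μ ^ 2) :
    ∀ z : ℝ,
      Tendsto
        (fun t : ℝ =>
          ((1 / π) *
              Real.sqrt ((θ ^ 2 + μ ^ 2) / (((z - b * t) / (δ * t)) ^ 2 + 1)) *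
              Real.exp (μ * δ * t + θ * (z - b * t)) *
              besselK1 (δ * t *
                Real.sqrt ((θ ^ 2 + μ ^ 2) * (1 + ((z - b * t) / (δ * t)) ^ 2)))) /
            (t ^ (-(1 / 2 : ℝ)) *
              Real.exp (t * (μ * δ - θ * b -
                Real.sqrt ((b ^ 2 + δ ^ 2) * (θ ^ 2 + μ ^ 2))))))
        atTop
        (𝓝 ((δ / Real.sqrt (2 * π)) *
          ((θ ^ 2 + μ ^ 2) / (b ^ 2 + δ ^ 2) ^ 3) ^ ((1 : ℝ) / 4) *
          Real.exp ((θ + b * Real.sqrt ((θ ^ 2 + μ ^ 2) / (b ^ 2 + δ ^ 2))) * z))) := by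
  intro z
  change Tendsto (fun t => nigDensity μ θ b δ t z / nigRate μ θ b δ t) atTop _
  set p := b ^ 2 + δ ^ 2
  set q := θ ^ 2 + μ ^ 2
  have hp : 0 < p := by positivity
  set s : ℝ → ℝ := fun t => √(p * t ^ 2 + (-2 * b * z) * t + z ^ 2)
  have hr : Tendsto (fun t => s t / t) atTop (𝓝 √p) := tendsto_sqrt_quadratic_div _ _ _
  have hgap := tendsto_mul_sqrt_sub_sqrt_quadratic hp (-2 * b * z) (z ^ 2)
  have hy : Tendsto (fun t => √q * s t) atTop atTop :=
    (tendsto_sqrt_quadratic_atTop hp _ _).const_mul_atTop (sqrt_pos.2 hθμ)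
  have hK := tendsto_scaledBesselK1.comp hy
  have hlim := ((tendsto_const_nhds (x := δ * √q / π * exp (θ * z))).mul hK).div
    (hr.mul (hr.const_mul √q).sqrt) (by positivity) |>.mul (hgap.const_mul √q).rexp
  rw [nig_limit_eq hp hθμ]
  refine hlim.congr' ?_
  filter_upwards [eventually_gt_atTop 0] with t ht
  refine (nigDensity_div_nigRate_eq hδ hθμ ht ?_).symm
  simp only [s, p]
  congr 1
  ring
end

section
/- Define K₁ : (0,∞) → ℝ by K₁(y) := ∫_0^∞ e^{−y·cosh u}·cosh u du. Fix parameters μ, θ, b ∈ ℝ and δ > 0 with μ ≠ 0, fix τ > 0 and K > 0, and let f(z) := (1/π)·sqrt((θ²+μ²)/(((z−bτ)/(δτ))²+1))·exp(μδτ + θ(z−bτ))·K₁(δτ·sqrt((θ²+μ²)·(1+((z−bτ)/(δτ))²))). Then there exist constants C > 0 and z₁ > 0 such that for all z with |z| ≥ z₁: (i) ∫_{−∞}^{log K − z} f(y) dy ≤ C·|z|^{-3/2}·exp(−θz − sqrt(θ²+μ²)·|z|) when z > 0, and (ii) ∫_{log K − z}^{∞} f(y) dy ≤ C·|z|^{-3/2}·exp(−θz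 − sqrt(θ²+μ²)·|z|) when z < 0. -/
open Filter Topology Real MeasureTheory

set_option maxHeartbeats 1000000

lemma cosh_quad_le {u : ℝ} (hu : 0 ≤ u) : 1 + u ^ 2 / 2 ≤ Real.cosh u := by
  have h1 : Real.cosh u = Real.cosh (2 * (u / 2)) := by rw [show (2:ℝ) * (u / 2) = u by ring]
  have h2 : Real.cosh (2 * (u / 2)) = Real.cosh (u / 2) ^ 2 + Real.sinh (u / 2) ^ 2 :=
    Real.cosh_two_mul _
  have h3 : u / 2 ≤ Real.sinh (u / 2) := Real.self_le_sinh_iff.2 (by linarith)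
  have h4 : Real.cosh (u / 2) ^ 2 = Real.sinh (u / 2) ^ 2 + 1 := Real.cosh_sq _
  nlinarith [sq_nonneg (Real.sinh (u / 2) - u / 2)]

lemma cosh_le_exp {u : ℝ} (hu : 0 ≤ u) : Real.cosh u ≤ Real.exp u := by
  rw [Real.cosh_eq]
  have : Real.exp (-u) ≤ Real.exp u := Real.exp_le_exp.2 (by linarith)
  linarith

lemma besselK1_nonneg (y : ℝ) : 0 ≤ besselK1 y := by
  refine integral_nonneg fun u => ?_
  exact mul_nonneg (Real.exp_nonneg _) (le_trans zero_le_one (Real.one_le_cosh u))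

lemma besselK1_le {x : ℝ} (hx : 1 ≤ x) :
    besselK1 x ≤ (Real.exp 1 * Real.sqrt π) * (Real.exp (-x) / Real.sqrt x) := by
  have hx0 : 0 < x := lt_of_lt_of_le one_pos hx
  have hb : 0 < x / 4 := by linarith
  have hgi : Integrable (fun u : ℝ => Real.exp 1 * Real.exp (-x) * Real.exp (-(x / 4) * u ^ 2))
      (volume.restrict (Set.Ioi 0)) :=
    ((integrable_exp_neg_mul_sq hb).const_mul (Real.exp 1 * Real.exp (-x))).integrableOn
  have hle : ∀ᵐ u ∂(volume.restrict (Set.Ioi (0 : ℝ))),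
      Real.exp (-x * Real.cosh u) * Real.cosh u
        ≤ Real.exp 1 * Real.exp (-x) * Real.exp (-(x / 4) * u ^ 2) := by
    refine (ae_restrict_iff' measurableSet_Ioi).2 (ae_of_all _ fun u hu => ?_)
    have hu0 : (0 : ℝ) ≤ u := le_of_lt hu
    have h1 : Real.cosh u ≤ Real.exp u := cosh_le_exp hu0
    have h2 : 1 + u ^ 2 / 2 ≤ Real.cosh u := cosh_quad_le hu0
    have h3 : Real.exp (-x * Real.cosh u) * Real.cosh u
        ≤ Real.exp (-x * Real.cosh u) * Real.exp u :=
      mul_le_mul_of_nonneg_left h1 (Real.exp_nonneg _)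
    have h5 : -x * Real.cosh u + u ≤ 1 + -x + -(x / 4) * u ^ 2 := by
      have hu2 : u ≤ x * u ^ 2 / 4 + 1 := by nlinarith [sq_nonneg (u - 2), sq_nonneg u]
      nlinarith
    calc Real.exp (-x * Real.cosh u) * Real.cosh u
        ≤ Real.exp (-x * Real.cosh u) * Real.exp u := h3
      _ = Real.exp (-x * Real.cosh u + u) := (Real.exp_add _ _).symm
      _ ≤ Real.exp (1 + -x + -(x / 4) * u ^ 2) := Real.exp_le_exp.2 h5
      _ = Real.exp 1 * Real.exp (-x) * Real.exp (-(x / 4) * u ^ 2) := by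
          rw [Real.exp_add, Real.exp_add]
  have h0 : 0 ≤ᵐ[volume.restrict (Set.Ioi (0 : ℝ))]
      fun u => Real.exp (-x * Real.cosh u) * Real.cosh u :=
    ae_of_all _ fun u =>
      mul_nonneg (Real.exp_nonneg _) (le_trans zero_le_one (Real.one_le_cosh u))
  have hmain := integral_mono_of_nonneg h0 hgi hle
  have hsqrt4 : Real.sqrt 4 = 2 := by
    rw [show (4 : ℝ) = 2 ^ 2 by norm_num, Real.sqrt_sq (by norm_num)]
  have hsx : (0:ℝ) < Real.sqrt x := Real.sqrt_pos.2 hx0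
  calc besselK1 x ≤ ∫ u in Set.Ioi (0:ℝ), Real.exp 1 * Real.exp (-x) * Real.exp (-(x / 4) * u ^ 2) :=
        hmain
    _ = Real.exp 1 * Real.exp (-x) * ∫ u in Set.Ioi (0:ℝ), Real.exp (-(x / 4) * u ^ 2) := by
        rw [integral_const_mul]
    _ = Real.exp 1 * Real.exp (-x) * (Real.sqrt (π / (x / 4)) / 2) := by
        rw [integral_gaussian_Ioi]
    _ = (Real.exp 1 * Real.sqrt π) * (Real.exp (-x) / Real.sqrt x) := by
        rw [Real.sqrt_div Real.pi_pos.le, show Real.sqrt (x/4) = Real.sqrt x / Real.sqrt 4 from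
          Real.sqrt_div hx0.le 4, hsqrt4]
        field_simp

lemma integral_exp_neg_mul_Ioi {c : ℝ} (hc : 0 < c) (a : ℝ) :
    ∫ y in Set.Ioi a, Real.exp (-(c * y)) = Real.exp (-(c * a)) / c := by
  have h := integral_comp_mul_left_Ioi (fun x => Real.exp (-x)) a hc
  simp only [smul_eq_mul] at h
  rw [h, integral_exp_neg_Ioi]
  ring

lemma integrableOn_exp_neg_mul_Ioi {c : ℝ} (hc : 0 < c) (a : ℝ) :
    IntegrableOn (fun y : ℝ => Real.exp (-(c * y))) (Set.Ioi a) := by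
  have := exp_neg_integrableOn_Ioi a hc
  simpa [neg_mul] using this

lemma integral_exp_mul_Iic' {c : ℝ} (hc : 0 < c) (a : ℝ) :
    ∫ y in Set.Iic a, Real.exp (c * y) = Real.exp (c * a) / c := by
  have h := integral_comp_neg_Iic a (fun y => Real.exp (-(c * y)))
  simp only [mul_neg, neg_neg] at h
  rw [h, integral_exp_neg_mul_Ioi hc, mul_neg, neg_neg]

lemma integrableOn_exp_mul_Iic' {c : ℝ} (hc : 0 < c) (a : ℝ) :
    IntegrableOn (fun y : ℝ => Real.exp (c * y)) (Set.Iic a) := by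
  have m : MeasurableEmbedding (Neg.neg : ℝ → ℝ) := (Homeomorph.neg ℝ).measurableEmbedding
  rw [show (volume : Measure ℝ) = Measure.map Neg.neg volume from
    (Measure.map_neg_eq_self _).symm, m.integrableOn_map_iff]
  simp only [Function.comp_def, Set.neg_preimage, Set.neg_Iic]
  rw [integrableOn_Ici_iff_integrableOn_Ioi]
  simpa [mul_neg] using integrableOn_exp_neg_mul_Ioi hc (-a)

lemma rpow_neg_three_halves {t : ℝ} (ht : 0 < t) :
    t ^ (-(3 : ℝ) / 2) = 1 / (t * Real.sqrt t) := by
  rw [show (-(3 : ℝ) / 2) = -(3 / 2) by norm_num, Real.rpow_neg ht.le, one_div]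
  congr 1
  rw [show ((3 : ℝ) / 2) = 1 + 1 / 2 by norm_num, Real.rpow_add ht, Real.rpow_one,
    ← Real.sqrt_eq_rpow]

/-- NIG tail-order estimates (NIGbeta±): for the NIG density `f`, the lower tail
`∫_{-∞}^{log K - z} f` (for `z > 0`) and the upper tail `∫_{log K - z}^{∞} f`
(for `z < 0`) are bounded by `C·|z|^{-3/2}·exp(-θz - √(θ²+μ²)|z|)` for `|z|` large. -/
theorem nig_tail_estimates
    (μ θ b δ : ℝ) (hδ : 0 < δ) (hμ : μ ≠ 0)
    (τ : ℝ) (hτ : 0 < τ) (K : ℝ) (hK : 0 < K)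
    (f : ℝ → ℝ)
    (hf : ∀ z, f z
      = (1 / π) *
          Real.sqrt ((θ ^ 2 + μ ^ 2) / (((z - b * τ) / (δ * τ)) ^ 2 + 1)) *
          Real.exp (μ * δ * τ + θ * (z - b * τ)) *
          besselK1 (δ * τ *
            Real.sqrt ((θ ^ 2 + μ ^ 2) * (1 + ((z - b * τ) / (δ * τ)) ^ 2)))) :
    ∃ C > (0 : ℝ), ∃ z₁ > (0 : ℝ), ∀ z : ℝ, z₁ ≤ |z| →
      (0 < z →
        (∫ y in Set.Iic (Real.log K - z), f y)
          ≤ C * |z| ^ (-(3 : ℝ) / 2) *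
              Real.exp (-θ * z - Real.sqrt (θ ^ 2 + μ ^ 2) * |z|))
      ∧ (z < 0 →
        (∫ y in Set.Ici (Real.log K - z), f y)
          ≤ C * |z| ^ (-(3 : ℝ) / 2) *
              Real.exp (-θ * z - Real.sqrt (θ ^ 2 + μ ^ 2) * |z|)) := by
  have hπ : 0 < π := Real.pi_pos
  have hμ2 : 0 < μ ^ 2 := by positivity
  have hsum : 0 < θ ^ 2 + μ ^ 2 := by positivity
  set α := Real.sqrt (θ ^ 2 + μ ^ 2) with hα_def
  have hα : 0 < α := Real.sqrt_pos.2 hsum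
  have hα2 : α ^ 2 = θ ^ 2 + μ ^ 2 := Real.sq_sqrt hsum.le
  clear_value α
  have hθα : |θ| < α := by
    have h : |θ| ^ 2 < α ^ 2 := by rw [hα2, sq_abs]; linarith
    exact lt_of_pow_lt_pow_left₀ 2 hα.le h
  obtain ⟨hθ1, hθ2⟩ := abs_lt.1 hθα
  have hcp : 0 < α + θ := by linarith
  have hcm : 0 < α - θ := by linarith
  have hδτ : 0 < δ * τ := mul_pos hδ hτ
  set C₁ := Real.exp 1 * Real.sqrt π with hC₁_def
  have hC₁ : 0 < C₁ := mul_pos (Real.exp_pos 1) (Real.sqrt_pos.2 hπ)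
  clear_value C₁
  set C₂ := 1 / π * (α * (δ * τ)) * Real.exp (μ * δ * τ) * C₁ / Real.sqrt α with hC₂_def
  have hsα : 0 < Real.sqrt α := Real.sqrt_pos.2 hα
  have hC₂ : 0 < C₂ := by
    apply div_pos _ hsα
    apply mul_pos (mul_pos (mul_pos (by positivity) (by positivity)) (Real.exp_pos _)) hC₁
  clear_value C₂
  have hB0 : ∀ y, 0 ≤ besselK1 y := besselK1_nonneg
  have hf0 : ∀ y, 0 ≤ f y := fun y => by
    rw [hf y]
    exact mul_nonneg (by positivity) (hB0 _)
  -- key pointwise bound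
  have key : ∀ y : ℝ, 1 ≤ α * |y - b * τ| →
      f y ≤ C₂ * (Real.exp (θ * (y - b * τ) - α * |y - b * τ|)
        / (|y - b * τ| * Real.sqrt |y - b * τ|)) := by
    intro y hy
    set w := y - b * τ with hw_def
    have hw0 : 0 < |w| := by
      by_contra h
      push_neg at h
      have hw : |w| = 0 := le_antisymm h (abs_nonneg w)
      rw [hw, mul_zero] at hy
      linarith
    set s := w / (δ * τ) with hs_def
    have hs_abs : |s| = |w| / (δ * τ) := by rw [hs_def, abs_div, abs_of_pos hδτ]
    have hsq1 : (0:ℝ) < Real.sqrt (s ^ 2 + 1) := Real.sqrt_pos.2 (by positivity)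
    have hpre : Real.sqrt ((θ ^ 2 + μ ^ 2) / (s ^ 2 + 1)) ≤ α * (δ * τ) / |w| := by
      rw [Real.sqrt_div hsum.le, ← hα_def, div_le_div_iff₀ hsq1 hw0]
      have h1 : |w| / (δ * τ) ≤ Real.sqrt (s ^ 2 + 1) := by
        rw [← hs_abs]
        exact (Real.le_sqrt (abs_nonneg s) (by positivity)).2 (by rw [sq_abs]; linarith)
      have h2 : |w| ≤ Real.sqrt (s ^ 2 + 1) * (δ * τ) := (div_le_iff₀ hδτ).1 h1
      nlinarith [mul_le_mul_of_nonneg_left h2 hα.le]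
    have harg : α * |w| ≤ δ * τ * Real.sqrt ((θ ^ 2 + μ ^ 2) * (1 + s ^ 2)) := by
      rw [Real.sqrt_mul hsum.le, ← hα_def]
      have h1 : |s| ≤ Real.sqrt (1 + s ^ 2) :=
        (Real.le_sqrt (abs_nonneg s) (by positivity)).2 (by rw [sq_abs]; linarith)
      have h2 : α * |w| = δ * τ * (α * |s|) := by
        rw [hs_abs]
        field_simp
      rw [h2]
      have h3 : α * |s| ≤ α * Real.sqrt (1 + s ^ 2) := mul_le_mul_of_nonneg_left h1 hα.le
      exact mul_le_mul_of_nonneg_left h3 hδτ.le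
    have harg1 : (1:ℝ) ≤ δ * τ * Real.sqrt ((θ ^ 2 + μ ^ 2) * (1 + s ^ 2)) := le_trans hy harg
    have hBle : besselK1 (δ * τ * Real.sqrt ((θ ^ 2 + μ ^ 2) * (1 + s ^ 2)))
        ≤ C₁ * (Real.exp (-(α * |w|)) / Real.sqrt (α * |w|)) := by
      refine le_trans (besselK1_le harg1) ?_
      rw [← hC₁_def]
      apply mul_le_mul_of_nonneg_left _ hC₁.le
      apply div_le_div₀ (Real.exp_nonneg _) (Real.exp_le_exp.2 (by linarith))
        (Real.sqrt_pos.2 (by positivity)) (Real.sqrt_le_sqrt harg)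
    have hfy : f y = 1 / π * Real.sqrt ((θ ^ 2 + μ ^ 2) / (s ^ 2 + 1))
        * Real.exp (μ * δ * τ + θ * w) * besselK1 (δ * τ *
          Real.sqrt ((θ ^ 2 + μ ^ 2) * (1 + s ^ 2))) := by rw [hf y]
    rw [hfy]
    have step1 : 1 / π * Real.sqrt ((θ ^ 2 + μ ^ 2) / (s ^ 2 + 1)) * Real.exp (μ * δ * τ + θ * w)
        ≤ 1 / π * (α * (δ * τ) / |w|) * Real.exp (μ * δ * τ + θ * w) := by
      apply mul_le_mul_of_nonneg_right _ (Real.exp_nonneg _)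
      exact mul_le_mul_of_nonneg_left hpre (by positivity)
    calc 1 / π * Real.sqrt ((θ ^ 2 + μ ^ 2) / (s ^ 2 + 1)) * Real.exp (μ * δ * τ + θ * w)
          * besselK1 (δ * τ * Real.sqrt ((θ ^ 2 + μ ^ 2) * (1 + s ^ 2)))
        ≤ (1 / π * (α * (δ * τ) / |w|) * Real.exp (μ * δ * τ + θ * w))
          * (C₁ * (Real.exp (-(α * |w|)) / Real.sqrt (α * |w|))) := by
          apply mul_le_mul step1 hBle (hB0 _) (by positivity)
      _ = C₂ * (Real.exp (θ * w - α * |w|) / (|w| * Real.sqrt |w|)) := by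
          rw [hC₂_def, Real.sqrt_mul hα.le,
            show θ * w - α * |w| = θ * w + -(α * |w|) by ring, Real.exp_add, Real.exp_add]
          have hsw : (0:ℝ) < Real.sqrt |w| := Real.sqrt_pos.2 hw0
          field_simp
  set L := Real.log K with hL_def
  set m := |L - b * τ| with hm_def
  have hm0 : 0 ≤ m := abs_nonneg _
  have hmL : L - b * τ ≤ m := hm_def ▸ le_abs_self _
  have hmL' : -(L - b * τ) ≤ m := hm_def ▸ neg_le_abs _
  clear_value L m
  have h2α : 0 < 2 / α := div_pos two_pos hα
  set z₁ := 2 * m + 2 + 2 / α with hz₁_def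
  have hz₁ : 0 < z₁ := by rw [hz₁_def]; linarith
  clear_value z₁
  set C := 4 * C₂ * (Real.exp ((α + θ) * m) / (α + θ) + Real.exp ((α - θ) * m) / (α - θ))
    with hC_def
  have hCpos : 0 < C := by
    rw [hC_def]
    apply mul_pos (by positivity)
    exact add_pos (div_pos (Real.exp_pos _) hcp) (div_pos (Real.exp_pos _) hcm)
  clear_value C
  refine ⟨C, hCpos, z₁, hz₁, fun z hz => ⟨?_, ?_⟩⟩
  · -- lower tail, z > 0
    intro hz0
    rw [abs_of_pos hz0] at hz ⊢
    have hzα : 2 / α ≤ z := by linarith [hz₁_def.symm.le, hz]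
    have hm2 : m ≤ z / 2 - 1 := by
      have := hz₁_def
      linarith
    set T := z / 2 with hT_def
    have hT : 0 < T := half_pos hz0
    clear_value T
    have hsT : 0 < Real.sqrt T := Real.sqrt_pos.2 hT
    have hTpos : 0 < T * Real.sqrt T := mul_pos hT hsT
    have h1T : 1 ≤ α * T := by
      rw [div_le_iff₀ hα] at hzα
      rw [hT_def]
      nlinarith
    have hdom : ∀ y ∈ Set.Iic (L - z),
        f y ≤ C₂ / (T * Real.sqrt T) * Real.exp ((α + θ) * (y - b * τ)) := by
      intro y hy
      simp only [Set.mem_Iic] at hy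
      have hwle : y - b * τ ≤ -T := by
        have h3 : y - b * τ ≤ m - z := by linarith [hmL]
        rw [hT_def]
        linarith
      have hwneg : y - b * τ < 0 := lt_of_le_of_lt hwle (by linarith)

      have habsw : |y - b * τ| = -(y - b * τ) := abs_of_neg hwneg
      have hTw : T ≤ |y - b * τ| := by rw [habsw]; linarith
      have h1w : 1 ≤ α * |y - b * τ| :=
        le_trans h1T (mul_le_mul_of_nonneg_left hTw hα.le)
      refine le_trans (key y h1w) ?_
      rw [habsw, show θ * (y - b * τ) - α * -(y - b * τ) = (α + θ) * (y - b * τ) by ring]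
      have hD : T * Real.sqrt T ≤ -(y - b * τ) * Real.sqrt (-(y - b * τ)) := by
        apply mul_le_mul (by linarith) (Real.sqrt_le_sqrt (by linarith))
          (Real.sqrt_nonneg _) (by linarith)
      calc C₂ * (Real.exp ((α + θ) * (y - b * τ)) / (-(y - b * τ) * Real.sqrt (-(y - b * τ))))
          = C₂ * Real.exp ((α + θ) * (y - b * τ)) / (-(y - b * τ) * Real.sqrt (-(y - b * τ))) := by
            ring
        _ ≤ C₂ * Real.exp ((α + θ) * (y - b * τ)) / (T * Real.sqrt T) :=
            div_le_div_of_nonneg_left (by positivity) hTpos hD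
        _ = C₂ / (T * Real.sqrt T) * Real.exp ((α + θ) * (y - b * τ)) := by ring
    have hgint : IntegrableOn
        (fun y => C₂ / (T * Real.sqrt T) * Real.exp ((α + θ) * (y - b * τ)))
        (Set.Iic (L - z)) := by
      have h1 : IntegrableOn (fun y : ℝ => Real.exp ((α + θ) * y)) (Set.Iic (L - z)) :=
        integrableOn_exp_mul_Iic' hcp _
      have h2 : (fun y : ℝ => C₂ / (T * Real.sqrt T) * Real.exp ((α + θ) * (y - b * τ)))
          = fun y => (C₂ / (T * Real.sqrt T) * Real.exp (-((α + θ) * (b * τ))))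
            * Real.exp ((α + θ) * y) := by
        funext y
        rw [mul_assoc, ← Real.exp_add]
        congr 2
        ring
      rw [h2]
      exact h1.const_mul _
    have hmono := integral_mono_of_nonneg (ae_of_all _ hf0) hgint
      ((ae_restrict_iff' measurableSet_Iic).2 (ae_of_all _ hdom))
    have hgval : (∫ y in Set.Iic (L - z),
          C₂ / (T * Real.sqrt T) * Real.exp ((α + θ) * (y - b * τ)))
        = C₂ / (T * Real.sqrt T) * Real.exp (-((α + θ) * (b * τ)))
            * (Real.exp ((α + θ) * (L - z)) / (α + θ)) := by
      calc (∫ y in Set.Iic (L - z), C₂ / (T * Real.sqrt T) * Real.exp ((α + θ) * (y - b * τ)))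
          = ∫ y in Set.Iic (L - z),
              (C₂ / (T * Real.sqrt T) * Real.exp (-((α + θ) * (b * τ))))
                * Real.exp ((α + θ) * y) := by
            refine setIntegral_congr_fun measurableSet_Iic fun y _ => ?_
            rw [mul_assoc, ← Real.exp_add]
            congr 2
            ring
        _ = (C₂ / (T * Real.sqrt T) * Real.exp (-((α + θ) * (b * τ))))
              * ∫ y in Set.Iic (L - z), Real.exp ((α + θ) * y) := integral_const_mul _ _
        _ = _ := by rw [integral_exp_mul_Iic' hcp]
    have hsz : 0 < Real.sqrt z := Real.sqrt_pos.2 hz0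
    have hzsz : 0 < z * Real.sqrt z := mul_pos hz0 hsz
    have hTz : z * Real.sqrt z / 4 ≤ T * Real.sqrt T := by
      have h1 : Real.sqrt z / 2 ≤ Real.sqrt T := by
        rw [hT_def]
        refine (Real.le_sqrt (by positivity) (by positivity)).2 ?_
        rw [div_pow, Real.sq_sqrt hz0.le]
        norm_num
        linarith

      calc z * Real.sqrt z / 4 = (z / 2) * (Real.sqrt z / 2) := by ring
        _ ≤ T * Real.sqrt T := mul_le_mul hT_def.ge h1 (by positivity) hT.le
    have hineq : C₂ / (T * Real.sqrt T) * Real.exp (-((α + θ) * (b * τ)))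
          * (Real.exp ((α + θ) * (L - z)) / (α + θ))
        ≤ C * (1 / (z * Real.sqrt z)) * Real.exp (-((α + θ) * z)) := by
      have hfac : Real.exp (-((α + θ) * (b * τ))) * Real.exp ((α + θ) * (L - z))
          = Real.exp ((α + θ) * (L - b * τ)) * Real.exp (-((α + θ) * z)) := by
        rw [← Real.exp_add, ← Real.exp_add]
        congr 1
        ring
      have e2 : Real.exp ((α + θ) * (L - b * τ)) ≤ Real.exp ((α + θ) * m) :=
        Real.exp_le_exp.2 (mul_le_mul_of_nonneg_left hmL hcp.le)
      have e3 : C₂ / (T * Real.sqrt T) ≤ C₂ * (4 / (z * Real.sqrt z)) := by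
        have := div_le_div_of_nonneg_left hC₂.le (by positivity : 0 < z * Real.sqrt z / 4) hTz
        calc C₂ / (T * Real.sqrt T) ≤ C₂ / (z * Real.sqrt z / 4) := this
          _ = C₂ * (4 / (z * Real.sqrt z)) := by field_simp
      calc C₂ / (T * Real.sqrt T) * Real.exp (-((α + θ) * (b * τ)))
            * (Real.exp ((α + θ) * (L - z)) / (α + θ))
          = C₂ / (T * Real.sqrt T)
              * (Real.exp (-((α + θ) * (b * τ))) * Real.exp ((α + θ) * (L - z))) / (α + θ) := by
            ring
        _ = C₂ / (T * Real.sqrt T)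
              * (Real.exp ((α + θ) * (L - b * τ)) * Real.exp (-((α + θ) * z))) / (α + θ) := by
            rw [hfac]
        _ ≤ C₂ * (4 / (z * Real.sqrt z))
              * (Real.exp ((α + θ) * m) * Real.exp (-((α + θ) * z))) / (α + θ) := by
            apply div_le_div_of_nonneg_right ?_ hcp.le
            apply mul_le_mul e3 (mul_le_mul_of_nonneg_right e2 (Real.exp_nonneg _))
              (by positivity) (by positivity)
        _ = 4 * C₂ * (Real.exp ((α + θ) * m) / (α + θ)) * (1 / (z * Real.sqrt z))
              * Real.exp (-((α + θ) * z)) := by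
            field_simp
        _ ≤ C * (1 / (z * Real.sqrt z)) * Real.exp (-((α + θ) * z)) := by
            apply mul_le_mul_of_nonneg_right _ (Real.exp_nonneg _)
            apply mul_le_mul_of_nonneg_right _ (by positivity)
            rw [hC_def]
            have hY : 0 < Real.exp ((α - θ) * m) / (α - θ) :=
              div_pos (Real.exp_pos _) hcm
            nlinarith
    rw [rpow_neg_three_halves hz0,
      show Real.exp (-θ * z - α * z) = Real.exp (-((α + θ) * z)) by congr 1; ring]
    calc (∫ y in Set.Iic (L - z), f y)
        ≤ ∫ y in Set.Iic (L - z),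
            C₂ / (T * Real.sqrt T) * Real.exp ((α + θ) * (y - b * τ)) := hmono
      _ = C₂ / (T * Real.sqrt T) * Real.exp (-((α + θ) * (b * τ)))
            * (Real.exp ((α + θ) * (L - z)) / (α + θ)) := hgval
      _ ≤ C * (1 / (z * Real.sqrt z)) * Real.exp (-((α + θ) * z)) := hineq
  · -- upper tail, z < 0
    intro hz0
    obtain ⟨t, ht, htpos⟩ : ∃ t, z = -t ∧ 0 < t := ⟨-z, by ring, by linarith⟩
    subst ht
    rw [abs_neg, abs_of_pos htpos] at hz ⊢
    rw [show L - -t = L + t by ring]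
    rw [rpow_neg_three_halves htpos,
      show Real.exp (-θ * -t - α * t) = Real.exp (-((α - θ) * t)) by congr 1; ring]
    have hzα : 2 / α ≤ t := by linarith [hz₁_def.symm.le, hz]
    have hm2 : m ≤ t / 2 - 1 := by
      have := hz₁_def
      linarith
    set T := t / 2 with hT_def
    have hT : 0 < T := half_pos htpos
    clear_value T
    have hsT : 0 < Real.sqrt T := Real.sqrt_pos.2 hT
    have hTpos : 0 < T * Real.sqrt T := mul_pos hT hsT
    have h1T : 1 ≤ α * T := by
      rw [div_le_iff₀ hα] at hzα
      rw [hT_def]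
      nlinarith
    have hdom : ∀ y ∈ Set.Ici (L + t),
        f y ≤ C₂ / (T * Real.sqrt T) * Real.exp (-((α - θ) * (y - b * τ))) := by
      intro y hy
      simp only [Set.mem_Ici] at hy
      have hwge : T ≤ y - b * τ := by
        have h3 : L + t - b * τ ≤ y - b * τ := by linarith
        rw [hT_def]
        linarith [hmL']
      have hwpos : 0 < y - b * τ := lt_of_lt_of_le hT hwge
      have habsw : |y - b * τ| = y - b * τ := abs_of_pos hwpos
      have h1w : 1 ≤ α * |y - b * τ| := by
        rw [habsw]
        exact le_trans h1T (mul_le_mul_of_nonneg_left hwge hα.le)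
      refine le_trans (key y h1w) ?_
      rw [habsw, show θ * (y - b * τ) - α * (y - b * τ) = -((α - θ) * (y - b * τ)) by ring]
      have hD : T * Real.sqrt T ≤ (y - b * τ) * Real.sqrt (y - b * τ) :=
        mul_le_mul hwge (Real.sqrt_le_sqrt hwge) (Real.sqrt_nonneg _) (by linarith)
      calc C₂ * (Real.exp (-((α - θ) * (y - b * τ))) / ((y - b * τ) * Real.sqrt (y - b * τ)))
          = C₂ * Real.exp (-((α - θ) * (y - b * τ))) / ((y - b * τ) * Real.sqrt (y - b * τ)) := by
            ring
        _ ≤ C₂ * Real.exp (-((α - θ) * (y - b * τ))) / (T * Real.sqrt T) :=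
            div_le_div_of_nonneg_left (by positivity) hTpos hD
        _ = C₂ / (T * Real.sqrt T) * Real.exp (-((α - θ) * (y - b * τ))) := by ring
    have hgint : IntegrableOn
        (fun y => C₂ / (T * Real.sqrt T) * Real.exp (-((α - θ) * (y - b * τ))))
        (Set.Ici (L + t)) := by
      rw [integrableOn_Ici_iff_integrableOn_Ioi]
      have h1 : IntegrableOn (fun y : ℝ => Real.exp (-((α - θ) * y))) (Set.Ioi (L + t)) :=
        integrableOn_exp_neg_mul_Ioi hcm _
      have h2 : (fun y : ℝ => C₂ / (T * Real.sqrt T) * Real.exp (-((α - θ) * (y - b * τ))))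
          = fun y => (C₂ / (T * Real.sqrt T) * Real.exp ((α - θ) * (b * τ)))
            * Real.exp (-((α - θ) * y)) := by
        funext y
        rw [mul_assoc, ← Real.exp_add]
        congr 2
        ring
      rw [h2]
      exact h1.const_mul _
    have hmono := integral_mono_of_nonneg (ae_of_all _ hf0) hgint
      ((ae_restrict_iff' measurableSet_Ici).2 (ae_of_all _ hdom))
    have hgval : (∫ y in Set.Ici (L + t),
          C₂ / (T * Real.sqrt T) * Real.exp (-((α - θ) * (y - b * τ))))
        = C₂ / (T * Real.sqrt T) * Real.exp ((α - θ) * (b * τ))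
            * (Real.exp (-((α - θ) * (L + t))) / (α - θ)) := by
      rw [integral_Ici_eq_integral_Ioi]
      calc (∫ y in Set.Ioi (L + t), C₂ / (T * Real.sqrt T) * Real.exp (-((α - θ) * (y - b * τ))))
          = ∫ y in Set.Ioi (L + t),
              (C₂ / (T * Real.sqrt T) * Real.exp ((α - θ) * (b * τ)))
                * Real.exp (-((α - θ) * y)) := by
            refine setIntegral_congr_fun measurableSet_Ioi fun y _ => ?_
            rw [mul_assoc, ← Real.exp_add]
            congr 2
            ring
        _ = (C₂ / (T * Real.sqrt T) * Real.exp ((α - θ) * (b * τ)))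
              * ∫ y in Set.Ioi (L + t), Real.exp (-((α - θ) * y)) := integral_const_mul _ _
        _ = _ := by rw [integral_exp_neg_mul_Ioi hcm]
    have hst : 0 < Real.sqrt t := Real.sqrt_pos.2 htpos
    have htst : 0 < t * Real.sqrt t := mul_pos htpos hst
    have hTz : t * Real.sqrt t / 4 ≤ T * Real.sqrt T := by
      have h1 : Real.sqrt t / 2 ≤ Real.sqrt T := by
        rw [hT_def]
        refine (Real.le_sqrt (by positivity) (by positivity)).2 ?_
        rw [div_pow, Real.sq_sqrt htpos.le]
        norm_num
        linarith
      calc t * Real.sqrt t / 4 = (t / 2) * (Real.sqrt t / 2) := by ring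
        _ ≤ T * Real.sqrt T := mul_le_mul hT_def.ge h1 (by positivity) hT.le
    have hineq : C₂ / (T * Real.sqrt T) * Real.exp ((α - θ) * (b * τ))
          * (Real.exp (-((α - θ) * (L + t))) / (α - θ))
        ≤ C * (1 / (t * Real.sqrt t)) * Real.exp (-((α - θ) * t)) := by
      have hfac : Real.exp ((α - θ) * (b * τ)) * Real.exp (-((α - θ) * (L + t)))
          = Real.exp (-((α - θ) * (L - b * τ))) * Real.exp (-((α - θ) * t)) := by
        rw [← Real.exp_add, ← Real.exp_add]
        congr 1
        ring
      have e2 : Real.exp (-((α - θ) * (L - b * τ))) ≤ Real.exp ((α - θ) * m) :=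
        Real.exp_le_exp.2 (by nlinarith [mul_le_mul_of_nonneg_left hmL' hcm.le])
      have e3 : C₂ / (T * Real.sqrt T) ≤ C₂ * (4 / (t * Real.sqrt t)) := by
        have h := div_le_div_of_nonneg_left hC₂.le
          (by positivity : (0:ℝ) < t * Real.sqrt t / 4) hTz
        calc C₂ / (T * Real.sqrt T) ≤ C₂ / (t * Real.sqrt t / 4) := h
          _ = C₂ * (4 / (t * Real.sqrt t)) := by field_simp
      calc C₂ / (T * Real.sqrt T) * Real.exp ((α - θ) * (b * τ))
            * (Real.exp (-((α - θ) * (L + t))) / (α - θ))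
          = C₂ / (T * Real.sqrt T)
              * (Real.exp ((α - θ) * (b * τ)) * Real.exp (-((α - θ) * (L + t)))) / (α - θ) := by
            ring
        _ = C₂ / (T * Real.sqrt T)
              * (Real.exp (-((α - θ) * (L - b * τ))) * Real.exp (-((α - θ) * t))) / (α - θ) := by
            rw [hfac]
        _ ≤ C₂ * (4 / (t * Real.sqrt t))
              * (Real.exp ((α - θ) * m) * Real.exp (-((α - θ) * t))) / (α - θ) := by
            apply div_le_div_of_nonneg_right ?_ hcm.le
            apply mul_le_mul e3 (mul_le_mul_of_nonneg_right e2 (Real.exp_nonneg _))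
              (by positivity) (by positivity)
        _ = 4 * C₂ * (Real.exp ((α - θ) * m) / (α - θ)) * (1 / (t * Real.sqrt t))
              * Real.exp (-((α - θ) * t)) := by
            field_simp
        _ ≤ C * (1 / (t * Real.sqrt t)) * Real.exp (-((α - θ) * t)) := by
            apply mul_le_mul_of_nonneg_right _ (Real.exp_nonneg _)
            apply mul_le_mul_of_nonneg_right _ (by positivity)
            rw [hC_def]
            have hX : 0 < Real.exp ((α + θ) * m) / (α + θ) :=
              div_pos (Real.exp_pos _) hcp
            nlinarith
    calc (∫ y in Set.Ici (L + t), f y)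
        ≤ ∫ y in Set.Ici (L + t),
            C₂ / (T * Real.sqrt T) * Real.exp (-((α - θ) * (y - b * τ))) := hmono
      _ = C₂ / (T * Real.sqrt T) * Real.exp ((α - θ) * (b * τ))
            * (Real.exp (-((α - θ) * (L + t))) / (α - θ)) := hgval
      _ ≤ C * (1 / (t * Real.sqrt t)) * Real.exp (-((α - θ) * t)) := hineq
end

section
/- Let X₁, …, X_n be independent, identically distributed real random variables on a probability space, let S₀ := 0 and S_k := X₁ + ⋯ + X_k for 1 ≤ k ≤ n, and set D := min_{1 ≤ k ≤ n} min{P(S_k > 0), P(S_k < 0)}. Then for every a > 0: (i) P(S_n > a) ≥ D·P(max_{1 ≤ k ≤ n} S_k > a), and (ii) P(S_n < −a) ≥ D·P(min_{1 ≤ k ≤ n} S_k < −a). -/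
/-! Let `τ` be the first time `k ≥ 1` at which `S_k > a`. The events `{τ = k}` are disjoint with
union `{max S_k > a}`, and `{τ = k}` depends only on `X_i, i < k`, so it is independent of the
increment `S_n - S_k`, which has the law of `S_{n-k}`. Hence
`P(τ = k, S_k ≤ S_n) = P(τ = k) P(S_{n-k} ≥ 0) ≥ D P(τ = k)` (for `k = n` the second factor
is `1`), and on `{τ = k, S_k ≤ S_n}` we have `S_n > a`; summing over `k` bounds the maximum.
The bound for the minimum is the same statement for the walk `-X`. -/

open MeasureTheory ProbabilityTheory Finset

namespace ProbabilityTheory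

section FinsetSum
variable {Ω ι : Type*} {X : ι → Ω → ℝ}

theorem iIndepFun.identDistrib_sum_of_card_eq [MeasurableSpace Ω] {P : Measure Ω}
    (hindep : iIndepFun X P) (hident : ∀ i j, IdentDistrib (X i) (X j) P P)
    {s t : Finset ι} (hst : #s = #t) :
    IdentDistrib (fun ω => ∑ i ∈ s, X i ω) (fun ω => ∑ i ∈ t, X i ω) P P := by
  let e : s ≃ t := Finset.equivOfCardEq hst
  have hpi : IdentDistrib (fun ω (i : s) => X i ω) (fun ω (i : s) => X (e i) ω) P P :=
    IdentDistrib.pi (fun i => hident i (e i)) (hindep.precomp Subtype.val_injective)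
      (hindep.precomp (Subtype.val_injective.comp e.injective))
  have hsum := hpi.comp (u := fun v : s → ℝ => ∑ i, v i)
    (Finset.measurable_sum univ fun i _ => measurable_pi_apply i)
  convert hsum using 2 with ω ω
  · exact (sum_coe_sort s (X · ω)).symm
  · exact ((e.sum_comp fun j : t => X j ω).trans (sum_coe_sort t (X · ω))).symm

theorem measurable_sum_iSup_comap (X : ι → Ω → ℝ) {s : Finset ι} {I : Set ι} (hs : ↑s ⊆ I) :
    Measurable[⨆ i ∈ I, MeasurableSpace.comap (X i) inferInstance] fun ω => ∑ i ∈ s, X i ω :=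
  Finset.measurable_sum s fun i hi =>
    (comap_measurable (X i)).mono
      (le_iSup₂ (f := fun i _ => MeasurableSpace.comap (X i) _) i (hs hi)) le_rfl

end FinsetSum

section FirstPassage
variable {Ω : Type*}

def firstPassage (S : ℕ → Ω → ℝ) (a : ℝ) (k : ℕ) : Set Ω :=
  {ω | a < S k ω ∧ ∀ j ∈ Ico 1 k, S j ω ≤ a}

theorem pairwiseDisjoint_firstPassage (S : ℕ → Ω → ℝ) (a : ℝ) :
    (Set.Ici 1).PairwiseDisjoint (firstPassage S a) := by
  intro k hk l hl hkl
  wlog hlt : k < l generalizing k l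
  · exact (this hl hk hkl.symm (by omega)).symm
  exact Set.disjoint_left.2 fun ω hωk hωl => (hωl.2 k (mem_Ico.2 ⟨hk, hlt⟩)).not_gt hωk.1

theorem setOf_lt_sup'_eq_biUnion_firstPassage (S : ℕ → Ω → ℝ) (a : ℝ) {n : ℕ}
    (hn : (Icc 1 n).Nonempty) :
    {ω | a < (Icc 1 n).sup' hn (S · ω)} = ⋃ k ∈ Icc 1 n, firstPassage S a k := by
  ext ω
  simp only [Set.mem_ofPred_eq, lt_sup'_iff, Set.mem_iUnion, exists_prop]
  constructor
  · intro hex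
    classical
    obtain ⟨hk, hka⟩ := Nat.find_spec hex
    refine ⟨Nat.find hex, hk, hka, fun j hj => ?_⟩
    obtain ⟨hj1, hjk⟩ := mem_Ico.1 hj
    by_contra! hja
    exact Nat.find_min hex hjk ⟨mem_Icc.2 ⟨hj1, hjk.le.trans (mem_Icc.1 hk).2⟩, hja⟩
  · rintro ⟨k, hk, hka, -⟩
    exact ⟨k, hk, hka⟩

theorem measurableSet_firstPassage {m : MeasurableSpace Ω} {S : ℕ → Ω → ℝ} {k : ℕ}
    (hS : ∀ j ≤ k, Measurable[m] (S j)) (a : ℝ) : MeasurableSet[m] (firstPassage S a k) := by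
  have hS' : ∀ j ∈ Ico 1 k, MeasurableSet[m] {ω | S j ω ≤ a} := fun j hj =>
    measurableSet_le (hS j (mem_Ico.1 hj).2.le) measurable_const
  simp only [firstPassage, Set.ofPred_and, Set.ofPred_forall]
  exact (measurableSet_lt measurable_const (hS k le_rfl)).inter
    (Finset.measurableSet_biInter _ hS')

variable [MeasurableSpace Ω] {P : Measure Ω} [IsFiniteMeasure P]

theorem mul_measureReal_lt_sup'_le_of_indepSet {S : ℕ → Ω → ℝ} (hS : ∀ k, Measurable (S k))
    {n : ℕ} (hn : (Icc 1 n).Nonempty) {a D : ℝ}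
    (hindep : ∀ k ∈ Icc 1 n, IndepSet (firstPassage S a k) {ω | S k ω ≤ S n ω} P)
    (hD : ∀ k ∈ Icc 1 n, D ≤ P.real {ω | S k ω ≤ S n ω}) :
    D * P.real {ω | a < (Icc 1 n).sup' hn (S · ω)} ≤ P.real {ω | a < S n ω} := by
  set A := firstPassage S a
  set B := fun k => {ω | S k ω ≤ S n ω}
  have hdisj : (↑(Icc 1 n) : Set ℕ).PairwiseDisjoint A :=
    (pairwiseDisjoint_firstPassage S a).subset fun k hk => (mem_Icc.1 hk).1
  have hA k : MeasurableSet (A k) := measurableSet_firstPassage (fun j _ => hS j) a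
  have hB k : MeasurableSet (B k) := measurableSet_le (hS k) (hS n)
  calc D * P.real {ω | a < (Icc 1 n).sup' hn (S · ω)}
      = ∑ k ∈ Icc 1 n, D * P.real (A k) := by
        rw [setOf_lt_sup'_eq_biUnion_firstPassage, measureReal_biUnion_finset hdisj
          fun k _ => hA k, mul_sum]
    _ ≤ ∑ k ∈ Icc 1 n, P.real (A k ∩ B k) := sum_le_sum fun k hk => by
        have hmul : P (A k ∩ B k) = P (A k) * P (B k) := (hindep k hk).measure_inter_eq_mul
        rw [measureReal_def, measureReal_def, hmul, ENNReal.toReal_mul, mul_comm]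
        exact mul_le_mul_of_nonneg_left (hD k hk) ENNReal.toReal_nonneg
    _ = P.real (⋃ k ∈ Icc 1 n, A k ∩ B k) :=
        (measureReal_biUnion_finset (hdisj.mono fun k => Set.inter_subset_left)
          fun k _ => (hA k).inter (hB k)).symm
    _ ≤ P.real {ω | a < S n ω} :=
        measureReal_mono (Set.iUnion₂_subset fun k _ ω hω => hω.1.1.trans_le hω.2)

end FirstPassage

section RandomWalk
variable {Ω : Type*} {n : ℕ} {X : Fin n → Ω → ℝ}

noncomputable def partialSum (X : Fin n → Ω → ℝ) (k : ℕ) (ω : Ω) : ℝ :=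
  ∑ i : Fin n with i.val < k, X i ω

theorem partialSum_zero : partialSum X 0 = 0 := by
  ext ω; simp [partialSum]

theorem partialSum_neg (k : ℕ) : partialSum (-X) k = -partialSum X k := by
  ext ω; simp [partialSum]

theorem partialSum_sub_partialSum (k : ℕ) (ω : Ω) :
    partialSum X n ω - partialSum X k ω = ∑ i : Fin n with k ≤ i.val, X i ω := by
  rw [sub_eq_iff_eq_add', partialSum, partialSum,
    ← sum_filter_add_sum_filter_not _ (fun i : Fin n => i.val < k)]
  simp [filter_filter, not_lt]

theorem setOf_partialSum_le_partialSum (k : ℕ) :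
    {ω | partialSum X k ω ≤ partialSum X n ω} =
      {ω | 0 ≤ ∑ i : Fin n with k ≤ i.val, X i ω} := by
  ext ω
  rw [Set.mem_ofPred_eq, Set.mem_ofPred_eq, ← partialSum_sub_partialSum, sub_nonneg]

variable [MeasurableSpace Ω] {P : Measure Ω}

theorem measurable_partialSum (hX : ∀ i, Measurable (X i)) (k : ℕ) :
    Measurable (partialSum X k) :=
  Finset.measurable_sum _ fun i _ => hX i

theorem indepSet_firstPassage_partialSum_le_partialSum (hX : ∀ i, Measurable (X i))
    (hindep : iIndepFun X P) (a : ℝ) (k : ℕ) :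
    IndepSet (firstPassage (partialSum X) a k) {ω | partialSum X k ω ≤ partialSum X n ω} P := by
  have hpast_future := indep_iSup_of_disjoint (fun i => (hX i).comap_le) hindep.iIndep
    (S := {i | i.val < k}) (T := {i | k ≤ i.val})
    (Set.disjoint_left.2 fun i hi hi' => (not_le.2 hi) (Set.mem_ofPred_eq ▸ hi'))
  refine hpast_future.indepSet_of_measurableSet ?_ ?_
  · refine measurableSet_firstPassage (fun j hj => measurable_sum_iSup_comap X ?_) a
    intro i hi
    simp only [coe_filter, mem_univ, true_and, Set.mem_ofPred_eq] at hi ⊢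
    omega
  · rw [setOf_partialSum_le_partialSum]
    exact measurableSet_le measurable_const
      (measurable_sum_iSup_comap X fun i hi => by simpa using hi)

theorem identDistrib_sum_filter_le_partialSum (hindep : iIndepFun X P)
    (hident : ∀ i j, IdentDistrib (X i) (X j) P P) {k : ℕ} (hk : k ≤ n) :
    IdentDistrib (fun ω => ∑ i : Fin n with k ≤ i.val, X i ω) (partialSum X (n - k)) P P := by
  refine hindep.identDistrib_sum_of_card_eq hident ?_
  have hsplit := card_filter_add_card_filter_not (s := (univ : Finset (Fin n))) (·.val < k)
  simp only [not_lt, card_univ, Fintype.card_fin, Fin.card_filter_val_lt] at hsplit ⊢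
  omega

theorem le_measureReal_partialSum_le_partialSum [IsProbabilityMeasure P]
    (hindep : iIndepFun X P) (hident : ∀ i j, IdentDistrib (X i) (X j) P P) {D : ℝ}
    (hD : ∀ k ∈ Icc 1 n, D ≤ P.real {ω | 0 < partialSum X k ω}) {k : ℕ} (hk : k ∈ Icc 1 n) :
    D ≤ P.real {ω | partialSum X k ω ≤ partialSum X n ω} := by
  obtain ⟨hk1, hkn⟩ := mem_Icc.1 hk
  have hlaw : P.real {ω | partialSum X k ω ≤ partialSum X n ω}
      = P.real {ω | 0 ≤ partialSum X (n - k) ω} := by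
    rw [setOf_partialSum_le_partialSum]
    exact congrArg ENNReal.toReal
      ((identDistrib_sum_filter_le_partialSum hindep hident hkn).measure_mem_eq measurableSet_Ici)
  rw [hlaw]
  rcases (n - k).eq_zero_or_pos with h | h
  · simp only [h, partialSum_zero, Pi.zero_apply, le_refl, Set.ofPred_true, probReal_univ]
    exact (hD 1 (mem_Icc.2 ⟨le_rfl, hk1.trans hkn⟩)).trans measureReal_le_one
  · exact (hD (n - k) (mem_Icc.2 ⟨h, by omega⟩)).trans
      (measureReal_mono (Set.ofPred_subset_ofPred.2 fun ω => le_of_lt))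

theorem mul_measureReal_lt_sup'_partialSum_le [IsProbabilityMeasure P] (hn : (Icc 1 n).Nonempty)
    (hX : ∀ i, Measurable (X i)) (hindep : iIndepFun X P)
    (hident : ∀ i j, IdentDistrib (X i) (X j) P P) {D : ℝ}
    (hD : ∀ k ∈ Icc 1 n, D ≤ P.real {ω | 0 < partialSum X k ω}) (a : ℝ) :
    D * P.real {ω | a < (Icc 1 n).sup' hn (partialSum X · ω)} ≤
      P.real {ω | a < partialSum X n ω} :=
  mul_measureReal_lt_sup'_le_of_indepSet (measurable_partialSum hX) hn
    (fun k _ => indepSet_firstPassage_partialSum_le_partialSum hX hindep a k)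
    (fun _ hk => le_measureReal_partialSum_le_partialSum hindep hident hD hk)

theorem mul_measureReal_inf'_partialSum_lt_le [IsProbabilityMeasure P] (hn : (Icc 1 n).Nonempty)
    (hX : ∀ i, Measurable (X i)) (hindep : iIndepFun X P)
    (hident : ∀ i j, IdentDistrib (X i) (X j) P P) {D : ℝ}
    (hD : ∀ k ∈ Icc 1 n, D ≤ P.real {ω | partialSum X k ω < 0}) (a : ℝ) :
    D * P.real {ω | (Icc 1 n).inf' hn (partialSum X · ω) < -a} ≤
      P.real {ω | partialSum X n ω < -a} := by
  have hneg := mul_measureReal_lt_sup'_partialSum_le (X := -X) hn (fun i => (hX i).neg)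
    (hindep.comp (fun _ => Neg.neg) fun _ => measurable_neg)
    (fun i j => (hident i j).comp measurable_neg) (by simpa [partialSum_neg] using hD) a
  convert hneg using 3 <;> ext ω <;> simp [partialSum_neg, inf'_lt_iff, lt_sup'_iff, lt_neg]

end RandomWalk

end ProbabilityTheory

/-- Reflection-principle lemma (Section 5), random-walk form: for an i.i.d. random walk
`S_k = X₁ + ⋯ + X_k` with `D = min_{1 ≤ k ≤ n} min{P(S_k > 0), P(S_k < 0)}`, the terminal
tail dominates `D` times the running-maximum (resp. running-minimum) tail:
`P(S_n > a) ≥ D·P(max_{1 ≤ k ≤ n} S_k > a)` and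
`P(S_n < -a) ≥ D·P(min_{1 ≤ k ≤ n} S_k < -a)` for every `a > 0`. -/
theorem random_walk_reflection_principle
    {Ω : Type*} [MeasurableSpace Ω] (P : Measure Ω) [IsProbabilityMeasure P]
    (n : ℕ) (hn : 1 ≤ n)
    (X : Fin n → Ω → ℝ) (hXmeas : ∀ i, Measurable (X i))
    (hindep : iIndepFun X P)
    (hident : ∀ i j, P.map (X i) = P.map (X j))
    (S : ℕ → Ω → ℝ)
    (hS : ∀ k ω, S k ω = ∑ i : Fin n, if (i : ℕ) < k then X i ω else 0)
    (D : ℝ)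
    (hD : D = (Finset.Icc 1 n).inf' (Finset.nonempty_Icc.mpr hn)
      (fun k => min (P {ω | 0 < S k ω}).toReal (P {ω | S k ω < 0}).toReal)) :
    ∀ a > (0 : ℝ),
      D * (P {ω | a < (Finset.Icc 1 n).sup' (Finset.nonempty_Icc.mpr hn)
              (fun k => S k ω)}).toReal
          ≤ (P {ω | a < S n ω}).toReal
      ∧ D * (P {ω | (Finset.Icc 1 n).inf' (Finset.nonempty_Icc.mpr hn)
              (fun k => S k ω) < -a}).toReal
          ≤ (P {ω | S n ω < -a}).toReal := by
  intro a _
  obtain rfl : S = partialSum X := funext₂ fun k ω => by rw [hS, partialSum, sum_filter]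
  have hident' i j : IdentDistrib (X i) (X j) P P :=
    ⟨(hXmeas i).aemeasurable, (hXmeas j).aemeasurable, hident i j⟩
  have hDk k (hk : k ∈ Icc 1 n) :
      D ≤ min (P.real {ω | 0 < partialSum X k ω}) (P.real {ω | partialSum X k ω < 0}) :=
    hD ▸ inf'_le _ hk
  exact ⟨mul_measureReal_lt_sup'_partialSum_le _ hXmeas hindep hident'
      (fun k hk => (hDk k hk).trans (min_le_left _ _)) a,
    mul_measureReal_inf'_partialSum_lt_le _ hXmeas hindep hident'
      (fun k hk => (hDk k hk).trans (min_le_right _ _)) a⟩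
end

section
/- Let W be a standard one-dimensional Brownian motion on a probability space (W₀ = 0, almost surely continuous sample paths, independent increments, and W_t − W_s Gaussian with mean 0 and variance t − s for 0 ≤ s ≤ t). Fix σ > 0, μ ∈ ℝ, τ > 0, K > 0, and set Z_s := σW_s + μs. Let h be a Borel-measurable real-valued functional on continuous paths w : [0,τ] → ℝ (with the uniform topology) satisfying inf_{s∈[0,τ]} w(s) ≤ h(w) ≤ sup_{s∈[0,τ]} w(s) for all w, and h(a·w) = a·h(w) for all a ∈ ℝ and all w. Set C := E[h((e^{Z_s})_{0≤s≤τ})] (which is finite and positive), and for x > 0 define ε(x) := E[(h((x·e^{Z_s})_{0≤s≤τ}) − K)⁺] − C·(x − K/C)⁺. Then ∫_{−∞}^{∞} |ε(e^z)|·e^{μz/σ²} dz < ∞. -/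
/-!
By homogeneity of `h`, `ε x = E[(x H - K)⁺] - (x C - K)⁺` with `H = h((e^{Z_s})_s)` and
`C = E[H]`, and `H` lies between the running minimum and maximum of `e^Z`. For an integer
`p > |μ/σ²|` this gives `|ε x| ≤ E[H^p] x^p / K^(p-1)` for `x ≤ K/C` and, by put–call parity,
`|ε x| ≤ K^(p+1) E[H^(-p)] x^(-p)` for `x ≥ K/C`, so `|ε(e^z)| e^{μz/σ²}` decays exponentially
at both ends. The moments `E[sup_{s ≤ τ} e^{b W_s}]` are finite: on a finite time grid Lévy's
maximal inequality (increments are Gaussian, hence symmetric) bounds the expected maximum by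
`2 E[e^{b W_τ}]`, and Fatou's lemma along uniform grids, together with path continuity,
passes to the supremum over `[0, τ]`.
-/

open MeasureTheory Filter Topology ProbabilityTheory
open scoped NNReal ENNReal

lemma inv_two_le_gaussianReal_Ici_zero (v : ℝ≥0) : 2⁻¹ ≤ gaussianReal 0 v (Set.Ici 0) := by
  have hsymm : gaussianReal 0 v (Set.Iic 0) = gaussianReal 0 v (Set.Ici 0) := by
    conv_lhs => rw [← neg_zero, ← gaussianReal_map_neg]
    rw [Measure.map_apply measurable_neg measurableSet_Iic]
    simp
  have hcover : 1 ≤ gaussianReal 0 v (Set.Iic 0) + gaussianReal 0 v (Set.Ici 0) := by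
    rw [← measure_univ (μ := gaussianReal 0 v), ← Set.Iic_union_Ici (a := (0 : ℝ))]
    exact measure_union_le _ _
  rw [hsymm, ← two_mul] at hcover
  exact (ENNReal.inv_le_iff_le_mul (by simp) (by simp)).2 hcover

lemma NNReal.tendsto_mul_floor_div {T : ℝ≥0} (hT : 0 < T) (s : ℝ≥0) :
    Tendsto (fun m : ℕ => T * ⌊((m : ℝ≥0) + 1) * s / T⌋₊ / ((m : ℝ≥0) + 1)) atTop (𝓝 s) := by
  have hmesh : Tendsto (fun m : ℕ => T / ((m : ℝ≥0) + 1)) atTop (𝓝 0) := by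
    simpa using (tendsto_add_atTop_iff_nat 1).2 (tendsto_const_div_atTop_nhds_zero_nat T)
  have hlower : Tendsto (fun m : ℕ => s - T / ((m : ℝ≥0) + 1)) atTop (𝓝 s) := by
    simpa using tendsto_const_nhds.sub hmesh
  refine tendsto_of_tendsto_of_tendsto_of_le_of_le hlower tendsto_const_nhds (fun m => ?_)
    (fun m => ?_)
  · rw [tsub_le_iff_right, ← add_div, le_div_iff₀ (by positivity), ← mul_add_one,
      ← div_le_iff₀' hT, mul_comm]
    exact (Nat.lt_floor_add_one _).le
  · rw [div_le_iff₀ (by positivity), mul_comm, ← le_div_iff₀ hT, mul_comm]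
    exact Nat.floor_le (by positivity)

lemma max_sub_zero_le_pow_div {y K : ℝ} (hy : 0 ≤ y) (hK : 0 < K) {p : ℕ} (hp : 1 ≤ p) :
    max (y - K) 0 ≤ y ^ p / K ^ (p - 1) := by
  refine max_le ?_ (by positivity)
  rcases le_total y K with hyK | hKy
  · linarith [show 0 ≤ y ^ p / K ^ (p - 1) by positivity]
  · calc y - K ≤ y * 1 := by linarith
      _ ≤ y * (y / K) ^ (p - 1) := by gcongr; exact one_le_pow₀ ((one_le_div hK).2 hKy)
      _ = y ^ p / K ^ (p - 1) := by
        rw [div_pow, ← mul_div_assoc, ← pow_succ', Nat.sub_add_cancel hp]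

lemma max_sub_zero_le_mul_inv_pow {y K : ℝ} (hy : 0 < y) (hK : 0 ≤ K) (p : ℕ) :
    max (K - y) 0 ≤ K ^ (p + 1) * (y ^ p)⁻¹ := by
  refine max_le ?_ (by positivity)
  rcases le_total K y with hKy | hyK
  · linarith [show 0 ≤ K ^ (p + 1) * (y ^ p)⁻¹ by positivity]
  · calc K - y ≤ K * 1 := by linarith
      _ ≤ K * (K / y) ^ p := by gcongr; exact one_le_pow₀ ((one_le_div hy).2 hyK)
      _ = K ^ (p + 1) * (y ^ p)⁻¹ := by rw [div_pow, pow_succ']; ring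

lemma exists_le_and_le_of_sInf_le_of_le_sSup {X : Type*} [TopologicalSpace X] [CompactSpace X]
    [Nonempty X] {w : X → ℝ} (hw : Continuous w) {y : ℝ}
    (hy : sInf (Set.range w) ≤ y ∧ y ≤ sSup (Set.range w)) : ∃ s₁ s₂, w s₁ ≤ y ∧ y ≤ w s₂ := by
  obtain ⟨s₁, hs₁⟩ := (isCompact_range hw).sInf_mem (Set.range_nonempty w)
  obtain ⟨s₂, hs₂⟩ := (isCompact_range hw).sSup_mem (Set.range_nonempty w)
  exact ⟨s₁, s₂, hs₁ ▸ hy.1, hs₂ ▸ hy.2⟩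

theorem lintegral_abs_comp_exp_mul_exp_lt_top {ε : ℝ → ℝ} {ρ x₀ A A' : ℝ} {p : ℕ}
    (hp : |ρ| < p) (hx₀ : 0 < x₀) (hleft : ∀ x, 0 < x → x ≤ x₀ → |ε x| ≤ A * x ^ p)
    (hright : ∀ x, x₀ ≤ x → |ε x| ≤ A' * (x ^ p)⁻¹) :
    ∫⁻ z, ENNReal.ofReal (|ε (Real.exp z)| * Real.exp (ρ * z)) < ⊤ := by
  set z₀ := Real.log x₀
  have hρ := abs_lt.1 hp
  rw [← lintegral_add_compl _ (measurableSet_Iic (a := z₀)), Set.compl_Iic]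
  refine ENNReal.add_lt_top.2 ⟨?_, ?_⟩
  · refine (setLIntegral_mono (g := fun z => ENNReal.ofReal (A * Real.exp ((p + ρ) * z)))
      (by fun_prop : Measurable _).ennreal_ofReal fun z hz => ENNReal.ofReal_le_ofReal ?_).trans_lt
      (IntegrableOn.setLIntegral_lt_top
        ((integrableOn_exp_mul_Iic (a := p + ρ) (by linarith) z₀).const_mul A))
    have hz : Real.exp z ≤ x₀ := by rw [← Real.exp_log hx₀]; exact Real.exp_le_exp.2 hz
    calc |ε (Real.exp z)| * Real.exp (ρ * z) ≤ A * Real.exp z ^ p * Real.exp (ρ * z) := by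
          gcongr; exact hleft _ (Real.exp_pos z) hz
      _ = A * Real.exp ((p + ρ) * z) := by
          rw [← Real.exp_nat_mul, mul_assoc, ← Real.exp_add]; ring_nf
  · refine (setLIntegral_mono (g := fun z => ENNReal.ofReal (A' * Real.exp ((ρ - p) * z)))
      (by fun_prop : Measurable _).ennreal_ofReal fun z hz => ENNReal.ofReal_le_ofReal ?_).trans_lt
      (IntegrableOn.setLIntegral_lt_top
        ((integrableOn_exp_mul_Ioi (a := ρ - p) (by linarith) z₀).const_mul A'))
    have hz : x₀ ≤ Real.exp z := by
      rw [← Real.exp_log hx₀]; exact Real.exp_le_exp.2 (le_of_lt hz)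
    calc |ε (Real.exp z)| * Real.exp (ρ * z) ≤ A' * (Real.exp z ^ p)⁻¹ * Real.exp (ρ * z) := by
          gcongr; exact hright _ hz
      _ = A' * Real.exp ((ρ - p) * z) := by
          rw [← Real.exp_nat_mul, ← Real.exp_neg, mul_assoc, ← Real.exp_add]; ring_nf

section Probability

variable {Ω : Type*} [MeasurableSpace Ω] {P : Measure Ω}

lemma measure_le_two_mul_measure_inter {m₁ m₂ : MeasurableSpace Ω} (hind : Indep m₁ m₂ P)
    {E F : Set Ω} (hE : MeasurableSet[m₁] E) (hF : MeasurableSet[m₂] F) (hF_half : 2⁻¹ ≤ P F) :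
    P E ≤ 2 * P (E ∩ F) := by
  rw [(Indep_iff _ _ _).1 hind E F hE hF]
  calc P E = 2 * (2⁻¹ * P E) := by
        rw [← mul_assoc, ENNReal.mul_inv_cancel two_ne_zero ENNReal.ofNat_ne_top, one_mul]
    _ ≤ 2 * (P E * P F) := by rw [mul_comm (P E)]; gcongr

lemma integral_pos_of_ae_pos [NeZero P] {f : Ω → ℝ} (hf : ∀ᵐ ω ∂P, 0 < f ω)
    (hfi : Integrable f P) : 0 < ∫ ω, f ω ∂P := by
  refine (integral_pos_iff_support_of_nonneg_ae (hf.mono fun ω h => h.le) hfi).2 <|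
    pos_iff_ne_zero.2 fun h0 => ?_
  obtain ⟨ω, hω, hfω⟩ := ((measure_eq_zero_iff_ae_notMem.1 h0).and hf).exists
  exact hω hfω.ne'

section LevyInequality

variable {X : ℕ → Ω → ℝ} {n : ℕ}

def firstEntrySet (X : ℕ → Ω → ℝ) (U : Set ℝ) : ℕ → Set Ω :=
  disjointed fun k => {ω | ∑ i ∈ Finset.range k, X i ω ∈ U}

lemma measurableSet_firstEntrySet (hX : ∀ i, Measurable (X i)) {U : Set ℝ}
    (hU : MeasurableSet U) (k : ℕ) : MeasurableSet (firstEntrySet X U k) :=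
  MeasurableSet.disjointed (fun _ => (Finset.measurable_sum _ fun i _ => hX i) hU) k

lemma measure_firstEntrySet_le_two_mul (hX : ∀ i, Measurable (X i)) (hind : iIndepFun X P)
    {U : Set ℝ} (hU : MeasurableSet U) {k : ℕ}
    (hmed : 2⁻¹ ≤ P {ω | 0 ≤ ∑ i ∈ Finset.Ico k n, X i ω}) :
    P (firstEntrySet X U k)
      ≤ 2 * P (firstEntrySet X U k ∩ {ω | 0 ≤ ∑ i ∈ Finset.Ico k n, X i ω}) := by
  set m : ℕ → MeasurableSpace Ω := fun i => MeasurableSpace.comap (X i) inferInstance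
  have hm : ∀ i, m i ≤ ‹MeasurableSpace Ω› := fun i => (hX i).comap_le
  have hpast : ∀ j ≤ k, Measurable[⨆ i ∈ {i | i < k}, m i] fun ω => ∑ i ∈ Finset.range j, X i ω :=
    fun j hj => Finset.measurable_sum _ fun i hi => Measurable.of_comap_le <|
      le_biSup m (show i < k by simp at hi; omega)
  have hfuture : Measurable[⨆ i ∈ {i | k ≤ i}, m i] fun ω => ∑ i ∈ Finset.Ico k n, X i ω :=
    Finset.measurable_sum _ fun i hi => Measurable.of_comap_le <|
      le_biSup m (show k ≤ i by simp at hi; omega)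
  refine measure_le_two_mul_measure_inter
    (indep_iSup_of_disjoint (S := {i | i < k}) (T := {i | k ≤ i}) hm hind.iIndep
      (Set.disjoint_left.2 fun i hi hi' => by
      simp at hi hi'; omega)) ?_ (measurableSet_le measurable_const hfuture) hmed
  rw [firstEntrySet, disjointed_eq_inter_compl]
  exact (hpast k le_rfl hU).inter <| .biInter (Set.to_countable _) fun j hj =>
    (hpast j (le_of_lt hj) hU).compl

/-- Lévy's maximal inequality. -/
theorem measure_exists_partialSum_mem_le (hX : ∀ i, Measurable (X i)) (hind : iIndepFun X P)
    (hmed : ∀ k ≤ n, 2⁻¹ ≤ P {ω | 0 ≤ ∑ i ∈ Finset.Ico k n, X i ω})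
    {U : Set ℝ} (hU : IsUpperSet U) (hUm : MeasurableSet U) :
    P {ω | ∃ k ≤ n, ∑ i ∈ Finset.range k, X i ω ∈ U}
      ≤ 2 * P {ω | ∑ i ∈ Finset.range n, X i ω ∈ U} := by
  set D := firstEntrySet X U with hD_def
  set F : ℕ → Set Ω := fun k => {ω | 0 ≤ ∑ i ∈ Finset.Ico k n, X i ω}
  have hD := measurableSet_firstEntrySet hX hUm
  have hF : ∀ k, MeasurableSet (F k) := fun k =>
    measurableSet_le measurable_const (Finset.measurable_sum _ fun i _ => hX i)
  have hunion : {ω | ∃ k ≤ n, ∑ i ∈ Finset.range k, X i ω ∈ U}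
      = ⋃ k ∈ Finset.range (n + 1), D k := by
    rw [hD_def, firstEntrySet, biUnion_range_succ_disjointed, partialSups_eq_biSup]
    ext ω
    simp
  have hdisj : Set.PairwiseDisjoint ↑(Finset.range (n + 1)) D :=
    (disjoint_disjointed _).set_pairwise _
  have hDF : ∀ k ≤ n, D k ∩ F k ⊆ {ω | ∑ i ∈ Finset.range n, X i ω ∈ U} := by
    rintro k hk ω ⟨hωD, hωF : 0 ≤ ∑ i ∈ Finset.Ico k n, X i ω⟩
    refine hU ?_ (disjointed_subset _ k hωD)
    rw [← Finset.sum_range_add_sum_Ico _ hk]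
    linarith
  calc P {ω | ∃ k ≤ n, ∑ i ∈ Finset.range k, X i ω ∈ U}
      = ∑ k ∈ Finset.range (n + 1), P (D k) := by
        rw [hunion, measure_biUnion_finset hdisj fun k _ => hD k]
    _ ≤ ∑ k ∈ Finset.range (n + 1), 2 * P (D k ∩ F k) := Finset.sum_le_sum fun k hk =>
        measure_firstEntrySet_le_two_mul hX hind hUm (hmed k (Finset.mem_range_succ_iff.1 hk))
    _ = 2 * P (⋃ k ∈ Finset.range (n + 1), D k ∩ F k) := by
        rw [← Finset.mul_sum, measure_biUnion_finset
          (hdisj.mono fun k => Set.inter_subset_left) fun k _ => (hD k).inter (hF k)]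
    _ ≤ 2 * P {ω | ∑ i ∈ Finset.range n, X i ω ∈ U} := by
        gcongr
        exact Set.iUnion₂_subset fun k hk => hDF k (Finset.mem_range_succ_iff.1 hk)

theorem lintegral_iSup_partialSum_le (hX : ∀ i, Measurable (X i)) (hind : iIndepFun X P)
    (hmed : ∀ k ≤ n, 2⁻¹ ≤ P {ω | 0 ≤ ∑ i ∈ Finset.Ico k n, X i ω})
    {g : ℝ → ℝ} (hg : Monotone g) (hg_nonneg : 0 ≤ g) :
    ∫⁻ ω, ⨆ k ≤ n, ENNReal.ofReal (g (∑ i ∈ Finset.range k, X i ω)) ∂P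
      ≤ 2 * ∫⁻ ω, ENNReal.ofReal (g (∑ i ∈ Finset.range n, X i ω)) ∂P := by
  set S : ℕ → Ω → ℝ := fun k ω => ∑ i ∈ Finset.range k, X i ω
  have hS : ∀ k, Measurable (S k) := fun k => Finset.measurable_sum _ fun i _ => hX i
  set M : Ω → ℝ := fun ω => (Finset.range (n + 1)).sup' Finset.nonempty_range_add_one
    fun k => g (S k ω)
  have hM : Measurable M :=
    Finset.measurable_range_sup'' fun k _ => hg.measurable.comp (hS k)
  have hM_nonneg : 0 ≤ᵐ[P] M := .of_forall fun ω =>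
    (hg_nonneg _).trans (Finset.le_sup' (fun k => g (S k ω)) (Finset.self_mem_range_succ n))
  have hlevel : ∀ t, P {ω | t ≤ M ω} ≤ 2 * P {ω | t ≤ g (S n ω)} := fun t => by
    have hset : {ω | t ≤ M ω} = {ω | ∃ k ≤ n, S k ω ∈ {x | t ≤ g x}} := by
      ext ω
      simp [M, Finset.le_sup'_iff]
    rw [hset]
    exact measure_exists_partialSum_mem_le hX hind hmed (fun x y hxy hx => hx.trans (hg hxy))
      (measurableSet_le measurable_const hg.measurable)
  calc ∫⁻ ω, ⨆ k ≤ n, ENNReal.ofReal (g (S k ω)) ∂P ≤ ∫⁻ ω, ENNReal.ofReal (M ω) ∂P :=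
        lintegral_mono fun ω => iSup₂_le fun k hk => ENNReal.ofReal_le_ofReal <|
          Finset.le_sup' (fun k => g (S k ω)) (Finset.mem_range_succ_iff.2 hk)
    _ = ∫⁻ t in Set.Ioi 0, P {ω | t ≤ M ω} :=
        lintegral_eq_lintegral_meas_le P hM_nonneg hM.aemeasurable
    _ ≤ ∫⁻ t in Set.Ioi 0, 2 * P {ω | t ≤ g (S n ω)} := lintegral_mono fun t => hlevel t
    _ = 2 * ∫⁻ ω, ENNReal.ofReal (g (S n ω)) ∂P := by
        rw [lintegral_const_mul' _ _ ENNReal.ofNat_ne_top,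
          lintegral_eq_lintegral_meas_le P (.of_forall fun ω => hg_nonneg _)
            (hg.measurable.comp (hS n)).aemeasurable]

end LevyInequality

section GaussianIncrements

variable {B : ℝ≥0 → Ω → ℝ}

lemma lintegral_iSup_exp_grid_le (hB : ∀ t, Measurable (B t)) (hind : HasIndepIncrements B P)
    (hlaw : ∀ s t, s ≤ t → P.map (fun ω => B t ω - B s ω) = gaussianReal 0 (t - s))
    {t : ℕ → ℝ≥0} (ht : Monotone t) (n : ℕ) (b : ℝ) :
    ∫⁻ ω, ⨆ k ≤ n, ENNReal.ofReal (Real.exp (b * (B (t k) ω - B (t 0) ω))) ∂P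
      ≤ 2 * ∫⁻ ω, ENNReal.ofReal (Real.exp (b * (B (t n) ω - B (t 0) ω))) ∂P := by
  wlog hb : 0 ≤ b generalizing B b
  · have hlaw_neg : ∀ s t, s ≤ t →
        P.map (fun ω => (-B) t ω - (-B) s ω) = gaussianReal 0 (t - s) := fun s t hst => by
      have : (fun ω => (-B) t ω - (-B) s ω) = (fun x => -x) ∘ fun ω => B t ω - B s ω := by
        funext ω; simp only [Pi.neg_apply, Function.comp_apply]; ring
      rw [this, ← Measure.map_map (f := fun ω => B t ω - B s ω) measurable_neg
        ((hB t).sub (hB s)), hlaw s t hst, gaussianReal_map_neg, neg_zero]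
    have := this (fun t => (hB t).neg) hind.neg hlaw_neg (-b) (by linarith)
    have hsign : ∀ x y : ℝ, -b * (-x - -y) = b * (x - y) := fun x y => by ring
    simpa only [Pi.neg_apply, hsign] using this
  have hinc : ∀ s t, Measurable fun ω => B t ω - B s ω := fun s t => (hB t).sub (hB s)
  set X : ℕ → Ω → ℝ := fun i ω => B (t (i + 1)) ω - B (t i) ω
  have hsum : ∀ k ω, ∑ i ∈ Finset.range k, X i ω = B (t k) ω - B (t 0) ω := fun k ω =>
    Finset.sum_range_sub (fun i => B (t i) ω) k
  have hmed : ∀ k ≤ n, 2⁻¹ ≤ P {ω | 0 ≤ ∑ i ∈ Finset.Ico k n, X i ω} := fun k hk => by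
    have hset : {ω | 0 ≤ ∑ i ∈ Finset.Ico k n, X i ω}
        = (fun ω => B (t n) ω - B (t k) ω) ⁻¹' Set.Ici 0 := by
      ext ω
      simp [Finset.sum_Ico_eq_sub _ hk, hsum]
    rw [hset, ← Measure.map_apply (hinc _ _) measurableSet_Ici, hlaw _ _ (ht hk)]
    exact inv_two_le_gaussianReal_Ici_zero _
  simp only [← hsum]
  exact lintegral_iSup_partialSum_le (fun i => hinc _ _) (hind.nat ht) hmed
    (fun x y hxy => Real.exp_le_exp.2 (mul_le_mul_of_nonneg_left hxy hb))
    (fun x => (Real.exp_pos _).le)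

theorem lintegral_iSup_exp_lt_top (hB : ∀ t, Measurable (B t)) (hind : HasIndepIncrements B P)
    (hlaw : ∀ s t, s ≤ t → P.map (fun ω => B t ω - B s ω) = gaussianReal 0 (t - s))
    (hB0 : ∀ᵐ ω ∂P, B 0 ω = 0) (hcont : ∀ᵐ ω ∂P, Continuous fun t => B t ω)
    {T : ℝ≥0} (hT : 0 < T) (b : ℝ) :
    ∫⁻ ω, ⨆ (s) (_ : s ≤ T), ENNReal.ofReal (Real.exp (b * B s ω)) ∂P < ⊤ := by
  set grid : ℕ → ℕ → ℝ≥0 := fun m k => T * k / (m + 1)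
  have hgrid_mono : ∀ m, Monotone (grid m) := fun m k l hkl => by
    simp only [grid]; gcongr
  have hgrid_last : ∀ m, grid m (m + 1) = T := fun m => by
    simp only [grid]; push_cast; field_simp
  set G : ℕ → Ω → ℝ≥0∞ := fun m ω =>
    ⨆ k ≤ m + 1, ENNReal.ofReal (Real.exp (b * (B (grid m k) ω - B 0 ω)))
  have hG_meas : ∀ m, Measurable (G m) := fun m =>
    .iSup fun k => .iSup fun _ => by fun_prop
  have hG_int : ∀ m, ∫⁻ ω, G m ω ∂P
      ≤ 2 * ∫⁻ ω, ENNReal.ofReal (Real.exp (b * (B T ω - B 0 ω))) ∂P := fun m => by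
    have := lintegral_iSup_exp_grid_le hB hind hlaw (hgrid_mono m) (m + 1) b
    rw [hgrid_last] at this
    simpa [grid] using this
  have hsup_le : ∀ᵐ ω ∂P,
      ⨆ (s) (_ : s ≤ T), ENNReal.ofReal (Real.exp (b * B s ω)) ≤ liminf (fun m => G m ω) atTop := by
    filter_upwards [hB0, hcont] with ω hω0 hωc
    refine iSup₂_le fun s hs => ?_
    set k : ℕ → ℕ := fun m => ⌊((m : ℝ≥0) + 1) * s / T⌋₊
    have hk : ∀ m, k m ≤ m + 1 := fun m => Nat.floor_le_of_le <| by
      rw [div_le_iff₀ hT]; push_cast; gcongr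
    have hf : Continuous fun r => ENNReal.ofReal (Real.exp (b * B r ω)) :=
      ENNReal.continuous_ofReal.comp (by fun_prop)
    calc ENNReal.ofReal (Real.exp (b * B s ω))
        = liminf (fun m => ENNReal.ofReal (Real.exp (b * B (grid m (k m)) ω))) atTop :=
          ((hf.tendsto s).comp (NNReal.tendsto_mul_floor_div hT s)).liminf_eq.symm
      _ ≤ liminf (fun m => G m ω) atTop := liminf_le_liminf <| .of_forall fun m =>
          le_iSup₂_of_le (f := fun k _ => ENNReal.ofReal
            (Real.exp (b * (B (grid m k) ω - B 0 ω)))) (k m) (hk m) (by simp [hω0])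
  have hgauss : Integrable (fun ω => Real.exp (b * (B T ω - B 0 ω))) P := by
    have := integrable_exp_mul_gaussianReal (μ := 0) (v := T - 0) b
    rw [← hlaw 0 T zero_le, integrable_map_measure (f := fun ω => B T ω - B 0 ω) (by fun_prop)
      ((hB T).sub (hB 0)).aemeasurable] at this
    exact this
  calc ∫⁻ ω, ⨆ (s) (_ : s ≤ T), ENNReal.ofReal (Real.exp (b * B s ω)) ∂P
      ≤ ∫⁻ ω, liminf (fun m => G m ω) atTop ∂P := lintegral_mono_ae hsup_le
    _ ≤ liminf (fun m => ∫⁻ ω, G m ω ∂P) atTop := lintegral_liminf_le hG_meas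
    _ ≤ 2 * ∫⁻ ω, ENNReal.ofReal (Real.exp (b * (B T ω - B 0 ω))) ∂P :=
        liminf_le_of_frequently_le' (.of_forall hG_int)
    _ < ⊤ := ENNReal.mul_lt_top (by simp) hgauss.lintegral_lt_top

end GaussianIncrements

theorem lintegral_iSup_exp_drift_lt_top {W : ℝ → Ω → ℝ} (hWmeas : ∀ t, Measurable (W t))
    (hW0 : ∀ᵐ ω ∂P, W 0 ω = 0)
    (hWcont : ∀ᵐ ω ∂P, Continuous fun t => W t ω)
    (hWindep : ∀ (n : ℕ) (t : Fin (n + 1) → ℝ), Monotone t → 0 ≤ t 0 →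
      iIndepFun (fun i : Fin n => fun ω => W (t i.succ) ω - W (t i.castSucc) ω) P)
    (hWgauss : ∀ s t : ℝ, 0 ≤ s → s ≤ t →
      P.map (fun ω => W t ω - W s ω) = gaussianReal 0 (t - s).toNNReal)
    {τ : ℝ} (hτ : 0 < τ) (b c : ℝ) :
    ∫⁻ ω, ⨆ s : Set.Icc (0 : ℝ) τ, ENNReal.ofReal (Real.exp (b * W s ω + c * s)) ∂P < ⊤ := by
  have hfin := lintegral_iSup_exp_lt_top (B := fun t ω => W t ω) (fun t => hWmeas t)
    (fun n t ht => hWindep n _ (NNReal.coe_mono.comp ht) (t 0).2)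
    (fun s t hst => by rw [NNReal.sub_def]; exact hWgauss s t s.2 hst) (by simpa using hW0)
    (hWcont.mono fun ω hω => hω.comp NNReal.continuous_coe) (Real.toNNReal_pos.2 hτ) b
  calc ∫⁻ ω, ⨆ s : Set.Icc (0 : ℝ) τ, ENNReal.ofReal (Real.exp (b * W s ω + c * s)) ∂P
      ≤ ∫⁻ ω, ENNReal.ofReal (Real.exp (|c| * τ)) *
          ⨆ (r : ℝ≥0) (_ : r ≤ τ.toNNReal), ENNReal.ofReal (Real.exp (b * W r ω)) ∂P :=
        lintegral_mono fun ω => ?_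
    _ = ENNReal.ofReal (Real.exp (|c| * τ)) *
          ∫⁻ ω, ⨆ (r : ℝ≥0) (_ : r ≤ τ.toNNReal), ENNReal.ofReal (Real.exp (b * W r ω)) ∂P :=
        lintegral_const_mul' _ _ ENNReal.ofReal_ne_top
    _ < ⊤ := ENNReal.mul_lt_top ENNReal.ofReal_lt_top hfin
  refine iSup_le fun s => ?_
  obtain ⟨s, hs0, hsτ⟩ := s
  calc ENNReal.ofReal (Real.exp (b * W s ω + c * s))
      ≤ ENNReal.ofReal (Real.exp (|c| * τ)) * ENNReal.ofReal (Real.exp (b * W s ω)) := by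
        rw [← ENNReal.ofReal_mul (Real.exp_pos _).le, ← Real.exp_add]
        refine ENNReal.ofReal_le_ofReal (Real.exp_le_exp.2 ?_)
        linarith [mul_le_mul (le_abs_self c) hsτ hs0 (abs_nonneg c)]
    _ ≤ _ := by
        gcongr
        refine le_iSup₂_of_le (f := fun (r : ℝ≥0) (_ : r ≤ τ.toNNReal) =>
          ENNReal.ofReal (Real.exp (b * W r ω))) s.toNNReal
          (Real.toNNReal_le_toNNReal hsτ) ?_
        rw [Real.coe_toNNReal _ hs0]

lemma integrable_pow_and_inv_pow_of_exp_bounds {ι : Type*} {H : Ω → ℝ} {Z : Ω → ι → ℝ}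
    (hH : Measurable H)
    (hbounds : ∀ᵐ ω ∂P, ∃ s₁ s₂, Real.exp (Z ω s₁) ≤ H ω ∧ H ω ≤ Real.exp (Z ω s₂))
    (hZ : ∀ b : ℝ, ∫⁻ ω, ⨆ s, ENNReal.ofReal (Real.exp (b * Z ω s)) ∂P < ⊤) (n : ℕ) :
    Integrable (fun ω => H ω ^ n) P ∧ Integrable (fun ω => (H ω ^ n)⁻¹) P := by
  have hdom : ∀ f : Ω → ℝ, Measurable f → ∀ b : ℝ,
      (∀ᵐ ω ∂P, 0 ≤ f ω ∧ ∃ s, f ω ≤ Real.exp (b * Z ω s)) → Integrable f P := fun f hf b hfb =>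
    ⟨hf.aestronglyMeasurable, (hasFiniteIntegral_iff_ofReal (hfb.mono fun ω h => h.1)).2 <|
      (lintegral_mono_ae <| hfb.mono fun ω ⟨_, s, hs⟩ =>
        (ENNReal.ofReal_le_ofReal hs).trans (le_iSup_of_le s le_rfl)).trans_lt (hZ b)⟩
  refine ⟨hdom _ (hH.pow_const n) n ?_, hdom _ (hH.pow_const n).inv (-n) ?_⟩ <;>
    filter_upwards [hbounds] with ω ⟨s₁, s₂, h₁, h₂⟩
  · have hH0 : 0 ≤ H ω := (Real.exp_pos _).le.trans h₁
    refine ⟨pow_nonneg hH0 n, s₂, ?_⟩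
    rw [Real.exp_nat_mul]
    exact pow_le_pow_left₀ hH0 h₂ n
  · refine ⟨inv_nonneg.2 (pow_nonneg ((Real.exp_pos _).le.trans h₁) n), s₁, ?_⟩
    rw [neg_mul, Real.exp_neg, Real.exp_nat_mul]
    exact inv_anti₀ (pow_pos (Real.exp_pos _) n) (pow_le_pow_left₀ (Real.exp_pos _).le h₁ n)

section PriceGap

variable {H : Ω → ℝ} {K x : ℝ} {p : ℕ}

lemma abs_call_sub_le_of_le (hH : 0 ≤ᵐ[P] H) (hHp : Integrable (fun ω => H ω ^ p) P)
    (hK : 0 < K) (hp : 1 ≤ p) (hx : 0 ≤ x) (hxK : x ≤ K / ∫ ω, H ω ∂P) :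
    |∫ ω, max (x * H ω - K) 0 ∂P - (∫ ω, H ω ∂P) * max (x - K / ∫ ω, H ω ∂P) 0|
      ≤ (∫ ω, H ω ^ p ∂P) / K ^ (p - 1) * x ^ p := by
  rw [max_eq_right (by linarith), mul_zero, sub_zero,
    abs_of_nonneg (integral_nonneg fun ω => le_max_right _ _)]
  calc ∫ ω, max (x * H ω - K) 0 ∂P ≤ ∫ ω, x ^ p / K ^ (p - 1) * H ω ^ p ∂P := by
        refine integral_mono_of_nonneg (.of_forall fun ω => le_max_right _ _)
          (hHp.const_mul _) ?_
        filter_upwards [hH] with ω hω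
        calc max (x * H ω - K) 0 ≤ (x * H ω) ^ p / K ^ (p - 1) :=
              max_sub_zero_le_pow_div (mul_nonneg hx hω) hK hp
          _ = x ^ p / K ^ (p - 1) * H ω ^ p := by ring
    _ = (∫ ω, H ω ^ p ∂P) / K ^ (p - 1) * x ^ p := by rw [integral_const_mul]; ring

lemma abs_call_sub_le_of_ge [IsProbabilityMeasure P] (hH : ∀ᵐ ω ∂P, 0 < H ω)
    (hHi : Integrable H P) (hHm : Integrable (fun ω => (H ω ^ p)⁻¹) P) (hK : 0 ≤ K)
    (hC : 0 < ∫ ω, H ω ∂P) (hx : 0 < x) (hxK : K / ∫ ω, H ω ∂P ≤ x) :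
    |∫ ω, max (x * H ω - K) 0 ∂P - (∫ ω, H ω ∂P) * max (x - K / ∫ ω, H ω ∂P) 0|
      ≤ K ^ (p + 1) * (∫ ω, (H ω ^ p)⁻¹ ∂P) * (x ^ p)⁻¹ := by
  have hlin : Integrable (fun ω => x * H ω - K) P := (hHi.const_mul x).sub (integrable_const K)
  have hparity : ∫ ω, max (x * H ω - K) 0 ∂P - (∫ ω, H ω ∂P) * max (x - K / ∫ ω, H ω ∂P) 0
      = ∫ ω, max (K - x * H ω) 0 ∂P := by
    have hsplit : ∀ ω, max (x * H ω - K) 0 = (x * H ω - K) + max (K - x * H ω) 0 := fun ω => by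
      have := max_zero_sub_eq_self (x * H ω - K)
      rw [neg_sub] at this
      linarith
    simp_rw [hsplit]
    rw [integral_add hlin (by simpa using hlin.neg_part), integral_sub (hHi.const_mul x)
      (integrable_const K), integral_const_mul, max_eq_left (by linarith)]
    simp only [integral_const, probReal_univ, smul_eq_mul, one_mul]
    field_simp
    ring
  rw [hparity, abs_of_nonneg (integral_nonneg fun ω => le_max_right _ _)]
  calc ∫ ω, max (K - x * H ω) 0 ∂P ≤ ∫ ω, K ^ (p + 1) * (x ^ p)⁻¹ * (H ω ^ p)⁻¹ ∂P := by
        refine integral_mono_of_nonneg (.of_forall fun ω => le_max_right _ _)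
          (hHm.const_mul _) ?_
        filter_upwards [hH] with ω hω
        calc max (K - x * H ω) 0 ≤ K ^ (p + 1) * ((x * H ω) ^ p)⁻¹ :=
              max_sub_zero_le_mul_inv_pow (mul_pos hx hω) hK p
          _ = K ^ (p + 1) * (x ^ p)⁻¹ * (H ω ^ p)⁻¹ := by rw [mul_pow, mul_inv]; ring
    _ = K ^ (p + 1) * (∫ ω, (H ω ^ p)⁻¹ ∂P) * (x ^ p)⁻¹ := by rw [integral_const_mul]; ring

theorem lintegral_abs_call_sub_lt_top [IsProbabilityMeasure P] (hH : ∀ᵐ ω ∂P, 0 < H ω)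
    (hmom : ∀ n : ℕ, Integrable (fun ω => H ω ^ n) P ∧ Integrable (fun ω => (H ω ^ n)⁻¹) P)
    (hK : 0 < K) (ρ : ℝ) :
    ∫⁻ z, ENNReal.ofReal (|∫ ω, max (Real.exp z * H ω - K) 0 ∂P
      - (∫ ω, H ω ∂P) * max (Real.exp z - K / ∫ ω, H ω ∂P) 0| * Real.exp (ρ * z)) < ⊤ := by
  obtain ⟨p, hp⟩ := exists_nat_gt |ρ|
  have hp1 : 0 < p := Nat.cast_pos.1 ((abs_nonneg _).trans_lt hp)
  have hHi : Integrable H P := by simpa using (hmom 1).1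
  have hC := integral_pos_of_ae_pos hH hHi
  exact lintegral_abs_comp_exp_mul_exp_lt_top hp (div_pos hK hC)
    (fun x hx hxK => abs_call_sub_le_of_le (hH.mono fun ω h => h.le) (hmom p).1 hK hp1 hx.le hxK)
    (fun x hxK => abs_call_sub_le_of_ge hH hHi (hmom p).2 hK.le hC
      ((div_pos hK hC).trans_le hxK) hxK)

end PriceGap

end Probability

theorem asian_type_payoff_integrability_BM_general
    {Ω : Type*} [MeasurableSpace Ω] (P : Measure Ω) [IsProbabilityMeasure P]
    (W : ℝ → Ω → ℝ)
    (hWmeas : ∀ t, Measurable (W t))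
    (hW0 : ∀ᵐ ω ∂P, W 0 ω = 0)
    (hWcont : ∀ᵐ ω ∂P, Continuous fun t => W t ω)
    (hWindep : ∀ (n : ℕ) (t : Fin (n + 1) → ℝ), Monotone t → 0 ≤ t 0 →
      iIndepFun
        (fun i : Fin n => fun ω => W (t i.succ) ω - W (t i.castSucc) ω) P)
    (hWgauss : ∀ s t : ℝ, 0 ≤ s → s ≤ t →
      P.map (fun ω => W t ω - W s ω) = gaussianReal 0 (t - s).toNNReal)
    (σ μ τ K : ℝ) (hτ : 0 < τ) (hK : 0 < K)
    (h : (Set.Icc (0 : ℝ) τ → ℝ) → ℝ) (hmeas : Measurable h)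
    (hbound : ∀ w : Set.Icc (0 : ℝ) τ → ℝ, Continuous w →
      sInf (Set.range w) ≤ h w ∧ h w ≤ sSup (Set.range w))
    (hhom : ∀ (a : ℝ) (w : Set.Icc (0 : ℝ) τ → ℝ), Continuous w →
      h (fun s => a * w s) = a * h w)
    (C : ℝ)
    (hC : C = ∫ ω, h (fun s => Real.exp (σ * W (s : ℝ) ω + μ * (s : ℝ))) ∂P)
    (ε : ℝ → ℝ)
    (hε : ∀ x > (0 : ℝ), ε x =
      (∫ ω, max (h (fun s => x * Real.exp (σ * W (s : ℝ) ω + μ * (s : ℝ))) - K) 0 ∂P)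
        - C * max (x - K / C) 0) :
    ∫⁻ z : ℝ, ENNReal.ofReal (|ε (Real.exp z)| * Real.exp (μ * z / σ ^ 2)) < ⊤ := by
  have : Nonempty (Set.Icc (0 : ℝ) τ) := ⟨⟨0, le_rfl, hτ.le⟩⟩
  set Z : Ω → Set.Icc (0 : ℝ) τ → ℝ := fun ω s => σ * W s ω + μ * s
  set H : Ω → ℝ := fun ω => h fun s => Real.exp (Z ω s)
  have hpath : ∀ᵐ ω ∂P, Continuous fun s => Real.exp (Z ω s) :=
    hWcont.mono fun ω hω => by fun_prop
  have hbounds : ∀ᵐ ω ∂P, ∃ s₁ s₂, Real.exp (Z ω s₁) ≤ H ω ∧ H ω ≤ Real.exp (Z ω s₂) :=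
    hpath.mono fun ω hω => exists_le_and_le_of_sInf_le_of_le_sSup hω (hbound _ hω)
  have hmoments := integrable_pow_and_inv_pow_of_exp_bounds (P := P) (Z := Z)
    (hmeas.comp (by fun_prop)) hbounds fun b => by
      simpa only [Z, mul_add, ← mul_assoc] using lintegral_iSup_exp_drift_lt_top hWmeas hW0
        hWcont hWindep hWgauss hτ (b * σ) (b * μ)
  have hHpos : ∀ᵐ ω ∂P, 0 < H ω :=
    hbounds.mono fun ω ⟨s₁, _, h₁, _⟩ => (Real.exp_pos _).trans_le h₁
  have hpayoff : ∀ x, ∫ ω, max (h (fun s => x * Real.exp (Z ω s)) - K) 0 ∂P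
      = ∫ ω, max (x * H ω - K) 0 ∂P := fun x =>
    integral_congr_ae <| hpath.mono fun ω hω => congrArg (fun y => max (y - K) 0) (hhom x _ hω)
  refine lt_of_eq_of_lt (lintegral_congr fun z => ?_)
    (lintegral_abs_call_sub_lt_top hHpos hmoments hK (μ / σ ^ 2))
  rw [hε _ (Real.exp_pos z), hpayoff, hC, div_mul_eq_mul_div]

/-- Brownian case of Theorem 4.1: for the geometric Brownian asset `e^{Z_s}`,
`Z_s = σW_s + μs`, a payoff functional `h` squeezed between the running infimum and
supremum and positively homogeneous, `C = E[h((e^{Z_s})_s)]`, and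
`ε(x) = E[(h((x e^{Z_s})_s) - K)⁺] - C(x - K/C)⁺`, one has
`∫ |ε(e^z)| e^{μz/σ²} dz < ∞` (integrability condition (A2)). -/
theorem asian_type_payoff_integrability_BM
    {Ω : Type*} [MeasurableSpace Ω] (P : Measure Ω) [IsProbabilityMeasure P]
    (W : ℝ → Ω → ℝ)
    (hWmeas : ∀ t, Measurable (W t))
    (hW0 : ∀ᵐ ω ∂P, W 0 ω = 0)
    (hWcont : ∀ᵐ ω ∂P, Continuous fun t => W t ω)
    (hWindep : ∀ (n : ℕ) (t : Fin (n + 1) → ℝ), Monotone t → 0 ≤ t 0 →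
      iIndepFun
        (fun i : Fin n => fun ω => W (t i.succ) ω - W (t i.castSucc) ω) P)
    (hWgauss : ∀ s t : ℝ, 0 ≤ s → s ≤ t →
      P.map (fun ω => W t ω - W s ω) = gaussianReal 0 (t - s).toNNReal)
    (σ μ τ K : ℝ) (hσ : 0 < σ) (hτ : 0 < τ) (hK : 0 < K)
    (h : (Set.Icc (0 : ℝ) τ → ℝ) → ℝ) (hmeas : Measurable h)
    (hbound : ∀ w : Set.Icc (0 : ℝ) τ → ℝ, Continuous w →
      sInf (Set.range w) ≤ h w ∧ h w ≤ sSup (Set.range w))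
    (hhom : ∀ (a : ℝ) (w : Set.Icc (0 : ℝ) τ → ℝ), Continuous w →
      h (fun s => a * w s) = a * h w)
    (C : ℝ)
    (hC : C = ∫ ω, h (fun s => Real.exp (σ * W (s : ℝ) ω + μ * (s : ℝ))) ∂P)
    (ε : ℝ → ℝ)
    (hε : ∀ x > (0 : ℝ), ε x =
      (∫ ω, max (h (fun s => x * Real.exp (σ * W (s : ℝ) ω + μ * (s : ℝ))) - K) 0 ∂P)
        - C * max (x - K / C) 0) :
    ∫⁻ z : ℝ, ENNReal.ofReal (|ε (Real.exp z)| * Real.exp (μ * z / σ ^ 2)) < ⊤ :=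
  asian_type_payoff_integrability_BM_general P W hWmeas hW0 hWcont hWindep hWgauss σ μ τ K hτ hK h
    hmeas hbound hhom C hC ε hε
end
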